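/- arXiv:1511.08267 — 13 statements merged into one kernel-verified Lean document; each statement's English description precedes it below -/
import Mathlib

section
/- For every integer b ≥ 2, the sequence s_b defined by s_b(0)=0, s_b(1)=1, s_b(bn)=s_b(n), s_b(bn+1)=s_b(n)+s_b(n+1), and s_b(bn+i)=s_b(n+1) for 2 ≤ i ≤ b-1 (for n ≥ 1, plus these recurrences at appropriate small values), satisfies: for n ≥ 1, s_b(n) equals the number of hyper-(b-ary)-expansions of n-1, i.e. the number of sequences (a_i)_{i≥0} with a_i ∈ {0,1,...,b}, all but finitely many zero, and n-1 = Σ a_i b^i. -/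
/-!
Split a hyper-`b`-ary expansion of `m` into its lowest digit `a₀` and the expansion of
`(m - a₀) / b` formed by the remaining digits. Since `a₀ ≡ m [MOD b]` and `a₀ ≤ b`, the lowest
digit is forced to be `m % b` when `b ∤ m`, and is `0` or `b` when `b ∣ m`. Hence the number
`c m` of expansions satisfies `c 0 = 1`, `c (r + b * q) = c q` for `0 < r < b` and
`c (b * (p + 1)) = c (p + 1) + c p`: these are the recurrences of `s_b` shifted by one, and strong
induction gives `s_b (m + 1) = c m`.
-/

/-- `s` satisfies the defining recurrences of the hyper-(b-ary) counting sequence. -/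
def IsSb (b : ℕ) (s : ℕ → ℕ) : Prop :=
  s 0 = 0 ∧ s 1 = 1 ∧
  ∀ n : ℕ, s (b * n) = s n ∧ s (b * n + 1) = s n + s (n + 1) ∧
    ∀ i : ℕ, 2 ≤ i → i ≤ b - 1 → s (b * n + i) = s (n + 1)

namespace HyperExpansion

section ShiftDigits

variable {M : Type*}

noncomputable def tail [Zero M] (f : ℕ →₀ M) : ℕ →₀ M :=
  f.comapDomain (· + 1) (add_left_injective 1).injOn

noncomputable def cons [AddZeroClass M] (a : M) (g : ℕ →₀ M) : ℕ →₀ M :=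
  Finsupp.single 0 a + g.embDomain (addRightEmbedding 1)

@[simp] theorem tail_apply [Zero M] (f : ℕ →₀ M) (i : ℕ) : tail f i = f (i + 1) := rfl

variable [AddZeroClass M]

@[simp] theorem cons_zero (a : M) (g : ℕ →₀ M) : cons a g 0 = a := by
  simp [cons, Finsupp.embDomain_of_notMem_range]

@[simp] theorem cons_succ (a : M) (g : ℕ →₀ M) (i : ℕ) : cons a g (i + 1) = g i := by
  have hemb := Finsupp.embDomain_apply_self (addRightEmbedding 1) g i
  rw [addRightEmbedding_apply] at hemb
  simp [cons, hemb]

theorem cons_tail (f : ℕ →₀ M) : cons (f 0) (tail f) = f := by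
  ext (_ | i) <;> simp

@[simp] theorem tail_cons (a : M) (g : ℕ →₀ M) : tail (cons a g) = g := by
  ext i; simp

end ShiftDigits

def value (b : ℕ) (f : ℕ →₀ ℕ) : ℕ := f.sum fun i a => a * b ^ i

theorem value_cons (b a : ℕ) (g : ℕ →₀ ℕ) : value b (cons a g) = a + b * value b g := by
  rw [value, cons, Finsupp.sum_add_index' (by simp) (fun _ _ _ => add_mul _ _ _),
    Finsupp.sum_single_index (by simp), Finsupp.sum_embDomain, value, Finsupp.mul_sum]
  simp only [addRightEmbedding_apply, pow_succ, pow_zero, mul_one]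
  congr 1
  exact Finsupp.sum_congr fun _ _ => by ring

theorem value_eq_apply_zero_add (b : ℕ) (f : ℕ →₀ ℕ) :
    value b f = f 0 + b * value b (tail f) := by
  conv_lhs => rw [← cons_tail f]
  exact value_cons b (f 0) (tail f)

theorem apply_zero_mod (b : ℕ) (f : ℕ →₀ ℕ) : f 0 % b = value b f % b := by
  rw [value_eq_apply_zero_add, Nat.add_mul_mod_self_left]

theorem apply_mul_pow_le_value (b : ℕ) (f : ℕ →₀ ℕ) (i : ℕ) : f i * b ^ i ≤ value b f := by
  unfold value
  simpa using Finsupp.single_le_sum f (g := fun i a => a * b ^ i) (fun _ _ => Nat.zero_le _) i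

end HyperExpansion

open HyperExpansion

def hyperExpansions (b m : ℕ) : Set (ℕ →₀ ℕ) := {f | (∀ i, f i ≤ b) ∧ value b f = m}

section Counting

variable {b m : ℕ}

theorem finite_hyperExpansions (hb : 2 ≤ b) : (hyperExpansions b m).Finite := by
  refine ((Finset.range (m + 1)).finsupp fun _ => Finset.range (b + 1)).finite_toSet.subset
    fun f ⟨hfb, hfm⟩ => Finset.mem_finsupp_iff.2 ⟨fun i hi => ?_, fun i _ => ?_⟩
  · have hpow : b ^ i ≤ m := hfm ▸ (Nat.le_mul_of_pos_left _ (Nat.pos_of_ne_zero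
      (Finsupp.mem_support_iff.1 hi))).trans (apply_mul_pow_le_value b f i)
    exact Finset.mem_range_succ_iff.2 ((Nat.lt_pow_self hb).le.trans hpow)
  · exact Finset.mem_range_succ_iff.2 (hfb i)

theorem hyperExpansions_zero (hb : 0 < b) : hyperExpansions b 0 = {0} := by
  refine Set.eq_singleton_iff_unique_mem.2 ⟨⟨fun _ => Nat.zero_le _, by simp [value]⟩, ?_⟩
  rintro f ⟨-, hf⟩
  ext i
  have hi := apply_mul_pow_le_value b f i
  rw [hf] at hi
  simpa [hb.ne'] using hi

noncomputable def hyperExpansionsConsEquiv (hb : 0 < b) {d q : ℕ} (hd : d ≤ b)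
    (hm : d + b * q = m) : hyperExpansions b q ≃ {f : hyperExpansions b m // f.1 0 = d} where
  toFun g := ⟨⟨cons d g, fun | 0 => by simpa | i + 1 => by simpa using g.2.1 i,
    by rw [value_cons, g.2.2, hm]⟩, cons_zero d g⟩
  invFun f := ⟨tail f.1, fun i => f.1.2.1 (i + 1), by
    have hv := f.1.2.2
    rw [value_eq_apply_zero_add, f.2] at hv
    exact Nat.eq_of_mul_eq_mul_left hb (Nat.add_left_cancel (hv.trans hm.symm))⟩
  left_inv g := Subtype.ext (tail_cons d g)
  right_inv f := Subtype.ext (Subtype.ext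
    ((congrArg (cons · (tail f.1.1)) f.2).symm.trans (cons_tail f.1.1)))

theorem card_hyperExpansions_add_mul {r : ℕ} (hr : 0 < r) (hrb : r < b) (q : ℕ) :
    Nat.card (hyperExpansions b (r + b * q)) = Nat.card (hyperExpansions b q) := by
  have digit (f : hyperExpansions b (r + b * q)) : f.1 0 = r := by
    have hmod := apply_zero_mod b f
    rw [f.2.2, Nat.add_mul_mod_self_left, Nat.mod_eq_of_lt hrb] at hmod
    rcases (f.2.1 0).lt_or_eq with hlt | heq
    · rwa [Nat.mod_eq_of_lt hlt] at hmod
    · rw [heq, Nat.mod_self] at hmod; omega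
  exact Nat.card_congr ((Equiv.subtypeUnivEquiv digit).symm.trans
    (hyperExpansionsConsEquiv (by omega) hrb.le rfl).symm)

theorem card_hyperExpansions_mul_succ (hb : 2 ≤ b) (p : ℕ) :
    Nat.card (hyperExpansions b (b * (p + 1))) =
      Nat.card (hyperExpansions b (p + 1)) + Nat.card (hyperExpansions b p) := by
  have := (finite_hyperExpansions (m := b * (p + 1)) hb).to_subtype
  have digit (f : hyperExpansions b (b * (p + 1))) : ¬f.1 0 = 0 ↔ f.1 0 = b := by
    have hmod := apply_zero_mod b f
    rw [f.2.2, Nat.mul_mod_right] at hmod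
    rcases (f.2.1 0).lt_or_eq with hlt | heq
    · rw [Nat.mod_eq_of_lt hlt] at hmod; omega
    · omega
  rw [← Nat.card_congr (Equiv.sumCompl fun f : hyperExpansions b (b * (p + 1)) => f.1 0 = 0),
    Nat.card_sum, Nat.card_congr (Equiv.subtypeEquivRight digit),
    ← Nat.card_congr (hyperExpansionsConsEquiv (q := p + 1) (by omega) b.zero_le (zero_add _)),
    ← Nat.card_congr (hyperExpansionsConsEquiv (q := p) (by omega) le_rfl (by ring))]

end Counting

theorem IsSb.apply_add_mul_succ {b : ℕ} {s : ℕ → ℕ} (hs : IsSb b s) {q r : ℕ} (hr : 0 < r)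
    (hrb : r < b) : s (r + b * q + 1) = s (q + 1) := by
  obtain ⟨-, -, hrec⟩ := hs
  rcases Nat.lt_or_ge (r + 1) b with hlt | hge
  · rw [add_comm r, add_assoc]
    exact (hrec q).2.2 (r + 1) (by omega) (by omega)
  · rw [show r + b * q + 1 = b * (q + 1) by rw [mul_add]; omega]
    exact (hrec (q + 1)).1

theorem IsSb.apply_succ_eq_card_hyperExpansions {b : ℕ} (hb : 2 ≤ b) {s : ℕ → ℕ}
    (hs : IsSb b s) (m : ℕ) : s (m + 1) = Nat.card (hyperExpansions b m) := by
  induction m using Nat.strong_induction_on with | _ m ih =>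
  obtain ⟨q, r, hrb, rfl⟩ : ∃ q r, r < b ∧ m = r + b * q :=
    ⟨m / b, m % b, Nat.mod_lt m (by omega), (Nat.mod_add_div m b).symm⟩
  have hq : q ≤ b * q := Nat.le_mul_of_pos_left q (by omega)
  rcases Nat.eq_zero_or_pos r with rfl | hr
  · rcases q with _ | p
    · simp [hs.2.1, hyperExpansions_zero (by omega : 0 < b)]
    · rw [zero_add, (hs.2.2 _).2.1, card_hyperExpansions_mul_succ hb, ih p (by nlinarith),
        ih (p + 1) (by nlinarith), add_comm]
  · rw [hs.apply_add_mul_succ hr hrb, card_hyperExpansions_add_mul hr hrb, ih q (by omega)]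

/-- For n ≥ 1, s_b(n) equals the number of hyper-(b-ary)-expansions of n-1. -/
theorem stmt0 (b : ℕ) (hb : 2 ≤ b) (s : ℕ → ℕ) (hs : IsSb b s) (n : ℕ) (hn : 1 ≤ n) :
    s n = Nat.card {f : ℕ →₀ ℕ //
      (∀ i, f i ≤ b) ∧ (f.sum fun i a => a * b ^ i) = n - 1} := by
  obtain ⟨m, rfl⟩ : ∃ m, n = m + 1 := ⟨n - 1, by omega⟩
  exact hs.apply_succ_eq_card_hyperExpansions hb m
end

section
/- For b = 2, the sequence s_2 satisfies s_2(0)=0, s_2(1)=1, s_2(2n)=s_2(n), and s_2(2n+1)=s_2(n)+s_2(n+1) for all n ≥ 0 (i.e., s_2 is Stern's diatomic sequence). -/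
/-!
Encode a hyper-binary expansion `N = Σ aᵢ 2ⁱ` (digits `aᵢ ∈ {0, 1, 2}`) as the polynomial
`p = Σ aᵢ Xⁱ`, so that `p(2) = N`. Splitting off the last digit, `p = X * q + a`, gives
`N = a + 2 q(2)`: an odd number `2m + 1` forces `a = 1` and `q(2) = m`, while `2m + 2` allows
`a = 0, q(2) = m + 1` or `a = 2, q(2) = m`. Counting, `h(2m + 1) = h(m)` and
`h(2m + 2) = h(m + 1) + h(m)` for the number `h(N)` of expansions of `N`, with `h(0) = 1`;
shifting the index by one (`s(n) = h(n - 1)`) these are exactly Stern's recurrences.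
-/

open Polynomial

namespace Polynomial

variable {R : Type*}

theorem X_mul_add_C_inj [Semiring R] {q q' : R[X]} {a a' : R} :
    X * q + C a = X * q' + C a' ↔ q = q' ∧ a = a' := by
  refine ⟨fun h => ⟨?_, ?_⟩, fun ⟨hq, ha⟩ => hq ▸ ha ▸ rfl⟩
  · ext n
    simpa [coeff_X_mul] using congr_arg (coeff · (n + 1)) h
  · simpa using congr_arg (coeff · 0) h

theorem X_mul_add_C_injective [Semiring R] (a : R) :
    Function.Injective fun q : R[X] => X * q + C a :=
  fun _ _ h => (X_mul_add_C_inj.1 h).1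

theorem coeff_mul_pow_le_eval [CommSemiring R] [PartialOrder R] [CanonicallyOrderedAdd R]
    (p : R[X]) (x : R) (i : ℕ) : p.coeff i * x ^ i ≤ p.eval x := by
  rw [eval_eq_sum_range' (Nat.lt_succ_of_le (le_max_right i p.natDegree))]
  exact Finset.single_le_sum (f := fun j => p.coeff j * x ^ j) (fun _ _ => zero_le)
    (Finset.mem_range.2 (Nat.lt_succ_of_le (le_max_left _ _)))

end Polynomial

def hyperBinary (N : ℕ) : Set ℕ[X] := {p | (∀ i, p.coeff i ≤ 2) ∧ p.eval 2 = N}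

theorem card_finsupp_eq_ncard_hyperBinary (N : ℕ) :
    Nat.card {f : ℕ →₀ ℕ // (∀ i, f i ≤ 2) ∧ (f.sum fun i a => a * 2 ^ i) = N} =
      (hyperBinary N).ncard :=
  Nat.card_congr <| .subtypeEquiv
    ((toFinsuppIso ℕ).toEquiv.trans AddMonoidAlgebra.coeffEquiv).symm fun f => by
      simp [hyperBinary, eval_eq_sum, Polynomial.sum_def, Finsupp.sum]

theorem X_mul_add_C_mem_hyperBinary_iff {q : ℕ[X]} {a N : ℕ} :
    X * q + C a ∈ hyperBinary N ↔ a ≤ 2 ∧ (∀ i, q.coeff i ≤ 2) ∧ a + 2 * q.eval 2 = N := by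
  rw [hyperBinary, Set.mem_ofPred_eq, ← Nat.and_forall_add_one]
  simp [coeff_X_mul, and_assoc, add_comm]

theorem hyperBinary_zero : hyperBinary 0 = {0} := by
  ext p
  refine ⟨fun ⟨_, hp⟩ => ?_, fun hp => ?_⟩
  · ext i
    simpa [hp] using p.coeff_mul_pow_le_eval 2 i
  · simp [Set.mem_singleton_iff.1 hp, hyperBinary]

theorem hyperBinary_two_mul_add_one (m : ℕ) :
    hyperBinary (2 * m + 1) = (X * · + C 1) '' hyperBinary m := by
  ext p
  obtain ⟨q, a, rfl⟩ : ∃ q a, X * q + C a = p := ⟨_, _, X_mul_divX_add p⟩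
  simp only [Set.mem_image, X_mul_add_C_inj, X_mul_add_C_mem_hyperBinary_iff]
  constructor
  · rintro ⟨ha, hq, h⟩
    exact ⟨q, ⟨hq, by omega⟩, rfl, by omega⟩
  · rintro ⟨q, ⟨hq, rfl⟩, rfl, rfl⟩
    exact ⟨by norm_num, hq, add_comm _ _⟩

theorem hyperBinary_two_mul_add_two (m : ℕ) :
    hyperBinary (2 * m + 2) =
      (X * · + C 0) '' hyperBinary (m + 1) ∪ (X * · + C 2) '' hyperBinary m := by
  ext p
  obtain ⟨q, a, rfl⟩ : ∃ q a, X * q + C a = p := ⟨_, _, X_mul_divX_add p⟩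
  simp only [Set.mem_union, Set.mem_image, X_mul_add_C_inj, X_mul_add_C_mem_hyperBinary_iff]
  constructor
  · rintro ⟨ha, hq, h⟩
    obtain ⟨rfl, hq2⟩ | ⟨rfl, hq2⟩ : a = 0 ∧ q.eval 2 = m + 1 ∨ a = 2 ∧ q.eval 2 = m := by omega
    exacts [.inl ⟨q, ⟨hq, hq2⟩, rfl, rfl⟩, .inr ⟨q, ⟨hq, hq2⟩, rfl, rfl⟩]
  · rintro (⟨q, ⟨hq, hm⟩, rfl, rfl⟩ | ⟨q, ⟨hq, hm⟩, rfl, rfl⟩) <;> exact ⟨by norm_num, hq, by omega⟩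

theorem hyperBinary_finite (N : ℕ) : (hyperBinary N).Finite := by
  induction N using Nat.strong_induction_on with
  | _ N ih =>
    obtain ⟨m, rfl | rfl⟩ := Nat.even_or_odd' N
    · rcases m with _ | m
      · simp [hyperBinary_zero]
      · rw [mul_add_one, hyperBinary_two_mul_add_two]
        exact ((ih _ (by omega)).image _).union ((ih _ (by omega)).image _)
    · rw [hyperBinary_two_mul_add_one]
      exact (ih m (by omega)).image _

theorem ncard_hyperBinary_two_mul_add_one (m : ℕ) :
    (hyperBinary (2 * m + 1)).ncard = (hyperBinary m).ncard := by
  rw [hyperBinary_two_mul_add_one, Set.ncard_image_of_injective _ (X_mul_add_C_injective 1)]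

theorem ncard_hyperBinary_two_mul_add_two (m : ℕ) :
    (hyperBinary (2 * m + 2)).ncard = (hyperBinary (m + 1)).ncard + (hyperBinary m).ncard := by
  have hdisj : Disjoint ((X * · + C 0) '' hyperBinary (m + 1)) ((X * · + C 2) '' hyperBinary m) :=
    Set.disjoint_left.2 fun _ ⟨_, _, h₀⟩ ⟨_, _, h₂⟩ => by
      simpa using (X_mul_add_C_inj.1 (h₀.trans h₂.symm)).2
  rw [hyperBinary_two_mul_add_two, Set.ncard_union_eq hdisj ((hyperBinary_finite _).image _)
    ((hyperBinary_finite _).image _), Set.ncard_image_of_injective _ (X_mul_add_C_injective 0),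
    Set.ncard_image_of_injective _ (X_mul_add_C_injective 2)]

/-- If s(0)=0 and, for n ≥ 1, s(n) counts hyper-binary expansions of n-1
(expansions n-1 = Σ a_i 2^i with digits a_i ∈ {0,1,2}), then s is Stern's
diatomic sequence: s(1)=1, s(2n)=s(n), s(2n+1)=s(n)+s(n+1). -/
theorem stmt1 (s : ℕ → ℕ) (h0 : s 0 = 0)
    (hcount : ∀ n : ℕ, 1 ≤ n → s n = Nat.card {f : ℕ →₀ ℕ //
      (∀ i, f i ≤ 2) ∧ (f.sum fun i a => a * 2 ^ i) = n - 1}) :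
    s 1 = 1 ∧ ∀ n : ℕ, s (2 * n) = s n ∧ s (2 * n + 1) = s n + s (n + 1) := by
  have hs : ∀ n, s (n + 1) = (hyperBinary n).ncard := fun n =>
    (hcount (n + 1) (Nat.le_add_left 1 n)).trans (card_finsupp_eq_ncard_hyperBinary n)
  have hs1 : s 1 = 1 := by simp [hs 0, hyperBinary_zero]
  refine ⟨hs1, fun n => ⟨?_, ?_⟩⟩
  · rcases n with _ | n
    · rfl
    rw [show 2 * (n + 1) = 2 * n + 1 + 1 by ring, hs, hs, ncard_hyperBinary_two_mul_add_one]
  · rcases n with _ | n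
    · simp [h0, hs1]
    rw [show 2 * (n + 1) + 1 = 2 * n + 2 + 1 by ring, hs, hs, hs,
      ncard_hyperBinary_two_mul_add_two, add_comm]
end

section
/- Let b ≥ 2 and define 2×2 integer matrices A_0 = [[1,0],[1,1]], A_1 = [[1,1],[0,1]], and A_i = [[0,1],[0,1]] for 2 ≤ i ≤ b-1. If n has base-b expansion n = (ε_d ... ε_0)_b, then s_b(n) = (1,0) · A_{ε_0} ⋯ A_{ε_d} · (0,1)^T. -/
/-- The matrix associated to a base-b digit: A_0, A_1, and A_i = [[0,1],[0,1]] for i ≥ 2. -/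
def digitMatrix (ε : ℕ) : Matrix (Fin 2) (Fin 2) ℕ :=
  if ε = 0 then !![1, 0; 1, 1] else if ε = 1 then !![1, 1; 0, 1] else !![0, 1; 0, 1]

open Matrix

theorem digitMatrix_mulVec (r x y : ℕ) :
    digitMatrix r *ᵥ ![x, y] =
      ![if r = 0 then x else if r = 1 then x + y else y, if r = 0 then x + y else y] := by
  ext i
  fin_cases i <;> split_ifs <;> simp_all [digitMatrix, mulVec, dotProduct, add_comm]

namespace IsSb

variable {b : ℕ} {s : ℕ → ℕ}

theorem apply_mul_add (hs : IsSb b s) (q : ℕ) {r : ℕ} (hr : r < b) :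
    s (b * q + r) = if r = 0 then s q else if r = 1 then s q + s (q + 1) else s (q + 1) := by
  obtain ⟨-, -, hrec⟩ := hs
  split_ifs with h0 h1
  · simpa [h0] using (hrec q).1
  · simpa [h1] using (hrec q).2.1
  · exact (hrec q).2.2 r (by omega) (by omega)

theorem apply_mul_add_add_one (hs : IsSb b s) (q : ℕ) {r : ℕ} (hr : r < b) :
    s (b * q + r + 1) = if r = 0 then s q + s (q + 1) else s (q + 1) := by
  obtain ⟨-, -, hrec⟩ := hs
  split_ifs with h0
  · simpa [h0] using (hrec q).2.1
  rcases Nat.lt_or_ge (r + 1) b with hlt | hge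
  · exact (hrec q).2.2 (r + 1) (by omega) (by omega)
  · -- the carry case `r = b - 1`
    have : b * q + r + 1 = b * (q + 1) := by rw [Nat.mul_succ]; omega
    rw [this]
    exact (hrec (q + 1)).1

theorem digitMatrix_mulVec_apply_pair (hs : IsSb b s) (q : ℕ) {r : ℕ} (hr : r < b) :
    digitMatrix r *ᵥ ![s q, s (q + 1)] = ![s (b * q + r), s (b * q + r + 1)] := by
  rw [digitMatrix_mulVec, hs.apply_mul_add q hr, hs.apply_mul_add_add_one q hr]

theorem digits_prod_mulVec (hs : IsSb b s) (hb : 1 < b) (n : ℕ) :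
    ((Nat.digits b n).map digitMatrix).prod *ᵥ ![0, 1] = ![s n, s (n + 1)] := by
  induction n using Nat.strong_induction_on with
  | _ n ih =>
    rcases Nat.eq_zero_or_pos n with rfl | hn
    · simp [hs.1, hs.2.1]
    · rw [Nat.digits_def' hb hn, List.map_cons, List.prod_cons, ← mulVec_mulVec,
        ih (n / b) (Nat.div_lt_self hn hb),
        hs.digitMatrix_mulVec_apply_pair _ (Nat.mod_lt n (by omega)), Nat.div_add_mod]

end IsSb

/-- If n = (ε_d … ε_0)_b then s_b(n) = (1,0)·A_{ε_0}⋯A_{ε_d}·(0,1)ᵀ, i.e. the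
(0,1) entry of the product A_{ε_0}⋯A_{ε_d} (digits least significant first). -/
theorem stmt2 (b : ℕ) (hb : 2 ≤ b) (s : ℕ → ℕ) (hs : IsSb b s) (n : ℕ) :
    s n = dotProduct
      (Matrix.vecMul ![1, 0] ((Nat.digits b n).map digitMatrix).prod) ![0, 1] := by
  rw [← dotProduct_mulVec, hs.digits_prod_mulVec hb n]
  simp
end

section
/- Let b ≥ 2 and let ψ_b : ℕ → ℕ map a number with binary expansion (ε_d ... ε_0)_2 to the number with base-b expansion (ε_d ... ε_0)_b (i.e., ψ_b(Σ ε_i 2^i) = Σ ε_i b^i). Then s_b(ψ_b(n)) = s_2(n) for all n ≥ 0. -/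
/-- ψ_b reads the binary digits of n as base-b digits. -/
def psi (b n : ℕ) : ℕ := Nat.ofDigits b (Nat.digits 2 n)

lemma psi_zero (b : ℕ) : psi b 0 = 0 := by simp [psi]

lemma psi_even (b m : ℕ) (hm : 0 < m) : psi b (2 * m) = b * psi b m := by
  unfold psi
  rw [Nat.digits_def' (by norm_num) (by omega)]
  have h1 : 2 * m % 2 = 0 := by omega
  have h2 : 2 * m / 2 = m := by omega
  rw [h1, h2, Nat.ofDigits_cons]
  ring

lemma psi_odd (b m : ℕ) : psi b (2 * m + 1) = b * psi b m + 1 := by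
  unfold psi
  rw [Nat.digits_def' (by norm_num) (by omega)]
  have h1 : (2 * m + 1) % 2 = 1 := by omega
  have h2 : (2 * m + 1) / 2 = m := by omega
  rw [h1, h2, Nat.ofDigits_cons]
  ring

lemma key (b : ℕ) (hb : 2 ≤ b) (sb s2 : ℕ → ℕ) (hsb : IsSb b sb) (hs2 : IsSb 2 s2) :
    ∀ n, sb (psi b n) = s2 n ∧ sb (psi b n + 1) = s2 (n + 1) := by
  obtain ⟨hb0, hb1, hbr⟩ := hsb
  obtain ⟨h20, h21, h2r⟩ := hs2
  intro n
  induction n using Nat.strong_induction_on with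
  | _ n ih =>
    match n with
    | 0 => rw [psi_zero]; exact ⟨by rw [hb0, h20], by rw [hb1, h21]⟩
    | Nat.succ k =>
      rcases Nat.even_or_odd (k + 1) with ⟨m, hm⟩ | ⟨m, hm⟩
      · -- k + 1 = 2 * m, m ≥ 1
        have hm' : k + 1 = 2 * m := by omega
        have hmpos : 0 < m := by omega
        have ihm := ih m (by omega)
        rw [show k.succ = 2 * m from hm', psi_even b m hmpos]
        constructor
        · rw [(hbr (psi b m)).1, ihm.1, (h2r m).1]
        · rw [(hbr (psi b m)).2.1, ihm.1, ihm.2, (h2r m).2.1]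
      · -- k + 1 = 2 * m + 1
        have hm' : k + 1 = 2 * m + 1 := by omega
        have ihm := ih m (by omega)
        rw [show k.succ = 2 * m + 1 from hm', psi_odd b m]
        constructor
        · rw [(hbr (psi b m)).2.1, ihm.1, ihm.2, (h2r m).2.1]
        · have h22 : 2 * m + 1 + 1 = 2 * (m + 1) := by ring
          rw [h22, (h2r (m + 1)).1]
          rcases eq_or_lt_of_le hb with hb2 | hb3
          · have : b * psi b m + 1 + 1 = b * (psi b m + 1) := by rw [← hb2]; ring
            rw [this, (hbr (psi b m + 1)).1, ihm.2]
          · have : b * psi b m + 1 + 1 = b * psi b m + 2 := by ring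
            rw [this, (hbr (psi b m)).2.2 2 le_rfl (by omega), ihm.2]

/-- s_b(ψ_b(n)) = s_2(n): Stern's sequence is a subsequence of s_b. -/
theorem stmt3 (b : ℕ) (hb : 2 ≤ b) (sb s2 : ℕ → ℕ) (hsb : IsSb b sb) (hs2 : IsSb 2 s2)
    (n : ℕ) : sb (psi b n) = s2 n := by
  exact (key b hb sb s2 hsb hs2 n).1
end

section
/- For b ≥ 2 and any n with base-b digits ε_0,...,ε_d, we have s_b((ε_d...ε_0)_b) ≤ s_2((ε̃_d...ε̃_0)_2), where ε̃_i = min(ε_i, 1). -/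
/-- s_b((ε_d…ε_0)_b) ≤ s_2((ε̃_d…ε̃_0)_2) where ε̃_i = min(ε_i, 1). -/
theorem stmt4 (b : ℕ) (hb : 2 ≤ b) (sb s2 : ℕ → ℕ) (hsb : IsSb b sb) (hs2 : IsSb 2 s2)
    (n : ℕ) :
    sb n ≤ s2 (Nat.ofDigits 2 ((Nat.digits b n).map fun ε => min ε 1)) := by
  obtain ⟨hb0, hb1, hrec⟩ := hsb
  obtain ⟨g0, g1, grec⟩ := hs2
  have g2 : ∀ x, s2 (2 * x) = s2 x := fun x => (grec x).1
  have g3 : ∀ x, s2 (2 * x + 1) = s2 x + s2 (x + 1) := fun x => (grec x).2.1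
  set t : ℕ → ℕ := fun m => Nat.ofDigits 2 ((Nat.digits b m).map fun ε => min ε 1) with ht
  suffices H : ∀ m, sb m ≤ s2 (t m) ∧ sb (m + 1) ≤ s2 (t m + 1) by exact (H n).1
  intro m
  induction m using Nat.strong_induction_on with
  | _ m ih =>
    rcases Nat.eq_zero_or_pos m with hm | hm
    · subst hm
      have ht0 : t 0 = 0 := by simp [ht]
      exact ⟨by simp [ht0, hb0, g0], by simp [ht0, hb1, g1]⟩
    · have hqlt : m / b < m := Nat.div_lt_self hm (by omega)
      obtain ⟨IH1, IH2⟩ := ih (m / b) hqlt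
      set q := m / b with hq
      set r := m % b with hrdef
      have hr : r < b := Nat.mod_lt m (by omega)
      have hmeq : m = b * q + r := (Nat.div_add_mod m b).symm
      have htm : t m = 2 * t q + min r 1 := by
        have hd := Nat.digits_def' (by omega : 1 < b) hm
        rw [← hq, ← hrdef] at hd
        simp only [ht, hd, List.map_cons, Nat.ofDigits_cons]
        omega
      rcases Nat.lt_or_ge r 1 with h0 | h1
      · -- r = 0
        have hr0 : r = 0 := by omega
        have htm' : t m = 2 * t q := by rw [htm, hr0]; simp
        have hmeq0 : m = b * q := by omega
        constructor
        · rw [htm', g2]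
          calc sb m = sb (b * q) := by rw [hmeq0]
            _ = sb q := (hrec q).1
            _ ≤ s2 (t q) := IH1
        · rw [htm', g3]
          calc sb (m + 1) = sb (b * q + 1) := by rw [hmeq0]
            _ = sb q + sb (q + 1) := (hrec q).2.1
            _ ≤ s2 (t q) + s2 (t q + 1) := add_le_add IH1 IH2
      · -- r ≥ 1
        have htm' : t m = 2 * t q + 1 := by rw [htm]; omega
        have key2 : sb (m + 1) = sb (q + 1) := by
          rcases Nat.lt_or_ge (r + 1) b with hlt | hge
          · have : m + 1 = b * q + (r + 1) := by omega
            rw [this]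
            exact (hrec q).2.2 (r + 1) (by omega) (by omega)
          · have : m + 1 = b * (q + 1) := by rw [Nat.mul_add, Nat.mul_one]; omega
            rw [this]
            exact (hrec (q + 1)).1
        constructor
        · rw [htm', g3]
          rcases Nat.lt_or_ge r 2 with h2 | h2
          · have hr1 : r = 1 := by omega
            calc sb m = sb (b * q + 1) := by rw [hmeq, hr1]
              _ = sb q + sb (q + 1) := (hrec q).2.1
              _ ≤ s2 (t q) + s2 (t q + 1) := add_le_add IH1 IH2
          · calc sb m = sb (b * q + r) := by rw [hmeq]
              _ = sb (q + 1) := (hrec q).2.2 r h2 (by omega)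
              _ ≤ s2 (t q + 1) := IH2
              _ ≤ s2 (t q) + s2 (t q + 1) := Nat.le_add_left _ _
        · have : t m + 1 = 2 * (t q + 1) := by omega
          rw [this, g2, key2]
          exact IH2
end

section
/- For every b ≥ 2 and every nonnegative integer n, there exists m ≤ n whose base-b expansion contains only digits 0 and 1, such that s_b(m) ≥ s_b(n). -/
theorem Nat.digits_mul_add_le_one {b m e : ℕ} (hb : 2 ≤ b) (he : e ≤ 1)
    (hm : ∀ d ∈ Nat.digits b m, d ≤ 1) : ∀ d ∈ Nat.digits b (b * m + e), d ≤ 1 := by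
  rcases Nat.eq_zero_or_pos (b * m + e) with h | h
  · simp [h]
  · rw [add_comm, Nat.digits_add b hb e m (by omega) (by grind)]
    simpa [he] using hm

namespace IsSb

variable {b : ℕ} {s : ℕ → ℕ}

theorem mul (hs : IsSb b s) (n : ℕ) : s (b * n) = s n := (hs.2.2 n).1

theorem mul_add_one (hs : IsSb b s) (n : ℕ) : s (b * n + 1) = s n + s (n + 1) :=
  (hs.2.2 n).2.1

theorem mul_add_of_two_le (hs : IsSb b s) {n i : ℕ} (hi : 2 ≤ i) (hib : i ≤ b) :
    s (b * n + i) = s (n + 1) := by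
  rcases hib.lt_or_eq with hib | rfl
  · exact (hs.2.2 n).2.2 i hi (by omega)
  · rw [← Nat.mul_succ, hs.mul]

theorem mul_add_le_mul_add_min_one (hs : IsSb b s) (hb : 2 ≤ b) {q m r : ℕ} (hr : r < b)
    (h₀ : s q ≤ s m) (h₁ : s (q + 1) ≤ s (m + 1)) :
    s (b * q + r) ≤ s (b * m + min r 1) ∧ s (b * q + r + 1) ≤ s (b * m + min r 1 + 1) := by
  rcases Nat.eq_zero_or_pos r with rfl | hr₁
  · simp only [Nat.add_zero, Nat.zero_min, hs.mul, hs.mul_add_one]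
    omega
  · have hmin : min r 1 = 1 := by omega
    have hsucc : s (b * q + r + 1) = s (q + 1) := hs.mul_add_of_two_le (i := r + 1) (by omega) hr
    have hbm : s (b * m + 1 + 1) = s (m + 1) := hs.mul_add_of_two_le (i := 2) le_rfl hb
    rw [hmin, hsucc, hbm, hs.mul_add_one]
    refine ⟨?_, h₁⟩
    rcases Nat.lt_or_eq_of_le hr₁ with hr₂ | rfl
    · rw [hs.mul_add_of_two_le hr₂ hr.le]
      omega
    · rw [hs.mul_add_one]
      omega

theorem exists_le_digits_le_one_and_le (hs : IsSb b s) (hb : 2 ≤ b) (n : ℕ) :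
    ∃ m ≤ n, (∀ d ∈ Nat.digits b m, d ≤ 1) ∧ s n ≤ s m ∧ s (n + 1) ≤ s (m + 1) := by
  induction n using Nat.strong_induction_on with
  | _ n ih =>
    rcases Nat.eq_zero_or_pos n with rfl | hn
    · exact ⟨0, le_rfl, by simp, le_rfl, le_rfl⟩
    obtain ⟨m, hmq, hdigits, h₀, h₁⟩ := ih (n / b) (Nat.div_lt_self hn (by omega))
    have hdecomp : b * (n / b) + n % b = n := Nat.div_add_mod n b
    have hr : n % b < b := Nat.mod_lt n (by omega)
    obtain ⟨h₀', h₁'⟩ := hs.mul_add_le_mul_add_min_one hb hr h₀ h₁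
    rw [hdecomp] at h₀' h₁'
    refine ⟨b * m + min (n % b) 1, ?_, Nat.digits_mul_add_le_one hb (min_le_right _ _) hdigits,
      h₀', h₁'⟩
    have := Nat.mul_le_mul_left b hmq
    omega

end IsSb

/-- For every n there is m ≤ n with only digits 0 and 1 in base b and s_b(m) ≥ s_b(n). -/
theorem stmt5 (b : ℕ) (hb : 2 ≤ b) (s : ℕ → ℕ) (hs : IsSb b s) (n : ℕ) :
    ∃ m : ℕ, m ≤ n ∧ (∀ d ∈ Nat.digits b m, d ≤ 1) ∧ s n ≤ s m := by
  obtain ⟨m, hmn, hdigits, hle, -⟩ := hs.exists_le_digits_le_one_and_le hb n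
  exact ⟨m, hmn, hdigits, hle⟩
end

section
/- Let b ≥ 2 and k ≥ 2. Then max over b^{k-2} ≤ n < b^{k-1} of s_b(n) equals F_k, the k-th Fibonacci number (F_0=0, F_1=1). -/
section Aux
variable {b : ℕ} {s : ℕ → ℕ}

lemma s_two (hb : 2 ≤ b) (hs : IsSb b s) (n : ℕ) : s (b * n + 2) = s (n + 1) := by
  rcases eq_or_lt_of_le hb with h | h
  · obtain rfl : b = 2 := h.symm
    have e : 2 * n + 2 = 2 * (n + 1) := by omega
    rw [e, (hs.2.2 (n + 1)).1]
  · exact (hs.2.2 n).2.2 2 le_rfl (by omega)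

lemma s_pow (hs : IsSb b s) (j : ℕ) : s (b ^ j) = 1 := by
  induction j with
  | zero => simpa using hs.2.1
  | succ j ih => rw [pow_succ, mul_comm, (hs.2.2 (b ^ j)).1]; exact ih

lemma s_bound (hb : 2 ≤ b) (hs : IsSb b s) (j : ℕ) :
    (∀ n ≤ b ^ j, s n ≤ Nat.fib (j + 1)) ∧
    (∀ n < b ^ j, s n + s (n + 1) ≤ Nat.fib (j + 2)) := by
  induction j with
  | zero =>
    simp only [pow_zero]
    constructor
    · intro n hn
      interval_cases n
      · simp [hs.1]
      · simp [hs.2.1]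
    · intro n hn
      interval_cases n
      simp [hs.1, hs.2.1]
  | succ j ih =>
    obtain ⟨ihA, ihB⟩ := ih
    have key : ∀ q r : ℕ, q < b ^ j → r < b →
        s (b * q + r) ≤ Nat.fib (j + 2) ∧
        s (b * q + r) + s (b * q + r + 1) ≤ Nat.fib (j + 3) := by
      intro q r hq hr
      have hq1 : q + 1 ≤ b ^ j := hq
      have hA1 : s (q + 1) ≤ Nat.fib (j + 1) := ihA _ hq1
      have hA0 : s q ≤ Nat.fib (j + 1) := ihA _ (le_of_lt hq)
      have hB : s q + s (q + 1) ≤ Nat.fib (j + 2) := ihB _ hq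
      have hfib : Nat.fib (j + 3) = Nat.fib (j + 1) + Nat.fib (j + 2) :=
        Nat.fib_add_two
      have hmono : Nat.fib (j + 1) ≤ Nat.fib (j + 2) := Nat.fib_le_fib_succ
      rcases r with _ | _ | r
      · rw [Nat.add_zero, (hs.2.2 q).1, (hs.2.2 q).2.1]
        exact ⟨le_trans hA0 hmono, by omega⟩
      · rw [(hs.2.2 q).2.1]
        have h2 : s (b * q + 1 + 1) = s (q + 1) := s_two hb hs q
        rw [h2]
        exact ⟨hB, by omega⟩
      · have hval : s (b * q + (r + 2)) = s (q + 1) :=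
          (hs.2.2 q).2.2 (r + 2) (by omega) (by omega)
        have hval2 : s (b * q + (r + 2) + 1) = s (q + 1) := by
          rcases Nat.lt_or_ge (r + 3) b with h | h
          · exact (hs.2.2 q).2.2 (r + 3) (by omega) (by omega)
          · have e : b * q + (r + 2) + 1 = b * (q + 1) := by
              have : r + 3 = b := by omega
              rw [← this]; ring
            rw [e, (hs.2.2 (q + 1)).1]
        rw [hval, hval2]
        exact ⟨le_trans hA1 hmono, by omega⟩
    have hq' : ∀ n, n < b ^ (j + 1) → n / b < b ^ j := by
      intro n hn
      have h1 : b * (n / b) ≤ n := Nat.mul_div_le n b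
      have h2 : b * (n / b) < b * b ^ j := by
        calc b * (n / b) ≤ n := h1
        _ < b ^ (j + 1) := hn
        _ = b * b ^ j := by ring
      exact Nat.lt_of_mul_lt_mul_left h2
    constructor
    · intro n hn
      rcases eq_or_lt_of_le hn with h | h
      · rw [h, s_pow hs]
        exact Nat.succ_le_of_lt (Nat.fib_pos.mpr (by omega))
      · have hdiv : b * (n / b) + n % b = n := Nat.div_add_mod n b
        have hr : n % b < b := Nat.mod_lt n (by omega)
        have := (key (n / b) (n % b) (hq' n h) hr).1
        rwa [hdiv] at this
    · intro n hn
      have hdiv : b * (n / b) + n % b = n := Nat.div_add_mod n b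
      have hr : n % b < b := Nat.mod_lt n (by omega)
      have := (key (n / b) (n % b) (hq' n hn) hr).2
      rwa [hdiv] at this

lemma s_wit (hb : 2 ≤ b) (hs : IsSb b s) (k : ℕ) :
    ∃ n, b ^ k ≤ n ∧ n < b ^ (k + 1) ∧ s n = Nat.fib (k + 2) ∧ s (n + 1) = Nat.fib (k + 1) := by
  induction k using Nat.strong_induction_on with
  | _ k ih =>
    rcases k with _ | _ | k
    · have hs2 : s 2 = 1 := by
        have := s_two hb hs 0
        simp only [Nat.mul_zero, Nat.zero_add] at this
        rw [this, hs.2.1]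
      exact ⟨1, by simp, by simpa using (by omega : 1 < b), by simpa using hs.2.1,
        by simpa using hs2⟩
    · have hs2 : s 2 = 1 := by
        have := s_two hb hs 0
        simp only [Nat.mul_zero, Nat.zero_add] at this
        rw [this, hs.2.1]
      refine ⟨b + 1, by simpa using (by omega : b ≤ b + 1), ?_, ?_, ?_⟩
      · calc b + 1 < b * b := by nlinarith
        _ = b ^ (1 + 1) := by ring
      · have h1 : s (b * 1 + 1) = s 1 + s 2 := (hs.2.2 1).2.1
        simp only [mul_one] at h1
        rw [h1, hs.2.1, hs2]
        decide
      · have h2 : s (b * 1 + 2) = s 2 := s_two hb hs 1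
        simp only [mul_one] at h2
        rw [show b + 1 + 1 = b + 2 from rfl, h2, hs2]
        decide
    · obtain ⟨n, h1, h2, h3, h4⟩ := ih k (by omega)
      have hf3 : Nat.fib (k + 3) = Nat.fib (k + 1) + Nat.fib (k + 2) := Nat.fib_add_two
      have hf4 : Nat.fib (k + 4) = Nat.fib (k + 2) + Nat.fib (k + 3) := Nat.fib_add_two
      refine ⟨b ^ 2 * n + 1, ?_, ?_, ?_, ?_⟩
      · calc b ^ (k + 2) = b ^ 2 * b ^ k := by ring
        _ ≤ b ^ 2 * n := Nat.mul_le_mul_left _ h1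
        _ ≤ b ^ 2 * n + 1 := Nat.le_succ _
      · have hb2 : 2 ≤ b ^ 2 := by nlinarith
        calc b ^ 2 * n + 1 < b ^ 2 * n + b ^ 2 := by omega
        _ = b ^ 2 * (n + 1) := by ring
        _ ≤ b ^ 2 * b ^ (k + 1) := Nat.mul_le_mul_left _ h2
        _ = b ^ (k + 2 + 1) := by ring
      · have e1 : b ^ 2 * n + 1 = b * (b * n) + 1 := by ring
        rw [show k + 2 + 2 = k + 4 from rfl, e1, (hs.2.2 (b * n)).2.1, (hs.2.2 n).1,
          (hs.2.2 n).2.1, h3, h4]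
        omega
      · have e1 : b ^ 2 * n + 1 + 1 = b * (b * n) + 2 := by ring
        rw [show k + 2 + 1 = k + 3 from rfl, e1, s_two hb hs (b * n), (hs.2.2 n).2.1, h3, h4]
        omega

end Aux

/-- The maximum of s_b on [b^{k-2}, b^{k-1}) is the k-th Fibonacci number. -/
theorem stmt6 (b k : ℕ) (hb : 2 ≤ b) (hk : 2 ≤ k) (s : ℕ → ℕ) (hs : IsSb b s) :
    IsGreatest (s '' Set.Ico (b ^ (k - 2)) (b ^ (k - 1))) (Nat.fib k) := by
  constructor
  · obtain ⟨n, h1, h2, h3, _⟩ := s_wit hb hs (k - 2)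
    refine ⟨n, ⟨h1, ?_⟩, ?_⟩
    · have e : k - 2 + 1 = k - 1 := by omega
      rwa [e] at h2
    · rw [h3]; congr 1; omega
  · rintro x ⟨n, ⟨_, hn2⟩, rfl⟩
    have h := (s_bound hb hs (k - 1)).1 n (le_of_lt hn2)
    have e : k - 1 + 1 = k := by omega
    rwa [e] at h
end

section
/- Let b ≥ 2 and k ≥ 2, and let a_k = (b^k - 1)/(b^2 - 1) + ((1 - (-1)^k)/2)·(b/(b+1)). Then a_k is a positive integer lying in [b^{k-2}, b^{k-1}), s_b(a_k) = F_k, and a_k is the smallest n in [b^{k-2}, b^{k-1}) with s_b(n) = F_k. -/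
/-!
Let `c_m` be the number written `1010…` (`m + 1` digits) in base `b`; then `a_{m+2} = c_m + (m mod 2)`.
Writing `n = b q + r`, the recursion expresses `s n` and `s (n + 1)` through `s q` and `s (q + 1)`,
so induction on the number of digits shows that every `n ∈ [b^m, b^{m+1})` satisfies
`s n ≤ F_{m+2}` and `s n + s (n + 1) ≤ F_{m+3}`, with equality only if `n ≥ a_{m+2}`, resp. `n ≥ c_m`.
Conversely, `c_{m+1} = b c_m + (m mod 2)` carries the pair of consecutive Fibonacci numbers
`s c_m, s (c_m + 1)` to the next such pair, which gives `s a_{m+2} = F_{m+2}`.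
-/

open Nat

lemma cast_mod_two (m : ℕ) : ((m % 2 : ℕ) : ℚ) = (1 - (-1) ^ m) / 2 := by
  rcases Nat.even_or_odd m with h | h
  · simp [h.neg_one_pow, Nat.even_iff.mp h]
  · rw [h.neg_one_pow, Nat.odd_iff.mp h]; norm_num

def alternatingDigits (b : ℕ) : ℕ → ℕ
  | 0 => 1
  | m + 1 => b * alternatingDigits b m + m % 2

section alternatingDigits

variable {b : ℕ}

lemma alternatingDigits_succ_add_mod_two (m : ℕ) :
    alternatingDigits b (m + 1) + (m + 1) % 2 = b * alternatingDigits b m + 1 := by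
  rw [alternatingDigits]; omega

lemma pow_le_alternatingDigits (m : ℕ) : b ^ m ≤ alternatingDigits b m := by
  induction m with
  | zero => simp [alternatingDigits]
  | succ m ih =>
    calc b ^ (m + 1) = b * b ^ m := by ring
      _ ≤ b * alternatingDigits b m := Nat.mul_le_mul_left b ih
      _ ≤ alternatingDigits b (m + 1) := Nat.le_add_right _ _

lemma alternatingDigits_add_mod_two_lt (hb : 2 ≤ b) (m : ℕ) :
    alternatingDigits b m + m % 2 < b ^ (m + 1) := by
  induction m with
  | zero => simp [alternatingDigits]; omega
  | succ m ih =>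
    have hc : b * (alternatingDigits b m + 1) ≤ b * b ^ (m + 1) :=
      Nat.mul_le_mul_left b (by omega)
    rw [alternatingDigits_succ_add_mod_two, pow_succ' b (m + 1)]
    rw [Nat.mul_add] at hc
    omega

lemma cast_alternatingDigits_add_mod_two (hb : b ≠ 1) (m : ℕ) :
    ((alternatingDigits b m + m % 2 : ℕ) : ℚ) =
      ((b : ℚ) ^ (m + 2) - 1) / ((b : ℚ) ^ 2 - 1)
        + ((1 - (-1 : ℚ) ^ (m + 2)) / 2) * ((b : ℚ) / ((b : ℚ) + 1)) := by
  have hb1 : (b : ℚ) + 1 ≠ 0 := by positivity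
  have hb2 : (b : ℚ) ^ 2 - 1 ≠ 0 := by
    rw [sub_ne_zero, ← Nat.cast_pow, Nat.cast_ne_one]
    exact fun h => hb (Nat.pow_eq_one.mp h |>.resolve_right (by norm_num))
  induction m with
  | zero => simp [alternatingDigits]; field_simp
  | succ m ih =>
    rw [alternatingDigits_succ_add_mod_two]
    rw [Nat.cast_add, cast_mod_two, ← eq_sub_iff_add_eq] at ih
    push_cast
    rw [ih]
    field_simp
    ring

end alternatingDigits

def FibBoundAt (b : ℕ) (s : ℕ → ℕ) (m n : ℕ) : Prop :=
  (s n ≤ fib (m + 2) ∧ (s n = fib (m + 2) → alternatingDigits b m + m % 2 ≤ n)) ∧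
    (s n + s (n + 1) ≤ fib (m + 3) ∧
      (s n + s (n + 1) = fib (m + 3) → alternatingDigits b m ≤ n))

namespace IsSb

variable {b : ℕ} {s : ℕ → ℕ}

lemma apply_mul_add_of_two_le (hs : IsSb b s) (n : ℕ) {i : ℕ} (hi : 2 ≤ i) (hib : i ≤ b) :
    s (b * n + i) = s (n + 1) := by
  rcases hib.lt_or_eq with hib | rfl
  · exact (hs.2.2 n).2.2 i hi (by omega)
  · rw [← Nat.mul_succ, (hs.2.2 (n + 1)).1]

lemma apply_of_pos_of_le (hs : IsSb b s) {n : ℕ} (hn : 0 < n) (hnb : n ≤ b) : s n = 1 := by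
  rcases (Nat.one_le_iff_ne_zero.mpr hn.ne').lt_or_eq with hn | rfl
  · simpa [hs.2.1] using hs.apply_mul_add_of_two_le 0 hn hnb
  · exact hs.2.1

lemma apply_pow (hs : IsSb b s) (m : ℕ) : s (b ^ m) = 1 := by
  induction m with
  | zero => exact hs.2.1
  | succ m ih => rw [pow_succ', (hs.2.2 _).1, ih]

lemma apply_alternatingDigits (hb : 2 ≤ b) (hs : IsSb b s) (m : ℕ) :
    s (alternatingDigits b m + m % 2) = fib (m + 2) ∧
      s (alternatingDigits b m + 1 - m % 2) = fib (m + 1) := by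
  induction m with
  | zero =>
    simp only [alternatingDigits, Nat.zero_mod]
    exact ⟨hs.2.1, hs.apply_of_pos_of_le two_pos hb⟩
  | succ m ih =>
    have hfib : fib (m + 1 + 2) = fib (m + 1) + fib (m + 2) := Nat.fib_add_two
    rcases Nat.mod_two_eq_zero_or_one m with h | h
    · simp only [alternatingDigits, h, show (m + 1) % 2 = 1 by omega, add_zero,
        Nat.add_sub_cancel, Nat.sub_zero] at ih ⊢
      rw [(hs.2.2 _).2.1, (hs.2.2 _).1, ih.1, ih.2]
      exact ⟨by omega, rfl⟩
    · simp only [alternatingDigits, h, show (m + 1) % 2 = 0 by omega, add_zero,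
        Nat.add_sub_cancel, Nat.sub_zero] at ih ⊢
      rw [(hs.2.2 _).2.1, hs.apply_mul_add_of_two_le _ le_rfl hb, ih.1, ih.2]
      exact ⟨by omega, rfl⟩

lemma fibBoundAt_mul (hb : 0 < b) (hs : IsSb b s) {m q : ℕ} (hq : FibBoundAt b s m q) :
    FibBoundAt b s (m + 1) (b * q) := by
  rw [FibBoundAt, show m + 1 + 2 = m + 3 from rfl, show m + 1 + 3 = m + 4 from rfl]
  have hF4 : fib (m + 4) = fib (m + 2) + fib (m + 3) := Nat.fib_add_two
  have hlt : fib (m + 2) < fib (m + 3) := Nat.fib_lt_fib_succ (by omega)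
  obtain ⟨⟨hle, hmin⟩, hle₂, -⟩ := hq
  have h0 : s (b * q) = s q := (hs.2.2 q).1
  have h1 : s (b * q + 1) = s q + s (q + 1) := (hs.2.2 q).2.1
  refine ⟨⟨by omega, fun h => by omega⟩, by omega, fun h => ?_⟩
  have hc : alternatingDigits b m + m % 2 ≤ q := hmin (by omega)
  calc alternatingDigits b (m + 1) = b * alternatingDigits b m + m % 2 := rfl
    _ ≤ b * (alternatingDigits b m + m % 2) := by
      rw [Nat.mul_add]
      have : m % 2 ≤ b * (m % 2) := Nat.le_mul_of_pos_left _ hb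
      omega
    _ ≤ b * q := Nat.mul_le_mul_left b hc

lemma fibBoundAt_mul_add_one (hb : 2 ≤ b) (hs : IsSb b s) {m q : ℕ} (hq : FibBoundAt b s m q)
    (hq' : s (q + 1) ≤ fib (m + 2)) : FibBoundAt b s (m + 1) (b * q + 1) := by
  rw [FibBoundAt, show m + 1 + 2 = m + 3 from rfl, show m + 1 + 3 = m + 4 from rfl]
  have hF4 : fib (m + 4) = fib (m + 2) + fib (m + 3) := Nat.fib_add_two
  obtain ⟨-, hle₂, hmin₂⟩ := hq
  have h1 : s (b * q + 1) = s q + s (q + 1) := (hs.2.2 q).2.1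
  have h2 : s (b * q + 1 + 1) = s (q + 1) := hs.apply_mul_add_of_two_le q le_rfl hb
  have hmin : s q + s (q + 1) = fib (m + 3) →
      alternatingDigits b (m + 1) + (m + 1) % 2 ≤ b * q + 1 := fun h => by
    have := Nat.mul_le_mul_left b (hmin₂ h)
    rw [alternatingDigits_succ_add_mod_two]
    omega
  refine ⟨⟨by omega, fun h => hmin (by omega)⟩, by omega, fun h => ?_⟩
  have := hmin (by omega)
  omega

lemma fibBoundAt_mul_add (hs : IsSb b s) {m q r : ℕ} (hq' : s (q + 1) ≤ fib (m + 2))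
    (hr : 2 ≤ r) (hrb : r < b) : FibBoundAt b s (m + 1) (b * q + r) := by
  rw [FibBoundAt, show m + 1 + 2 = m + 3 from rfl, show m + 1 + 3 = m + 4 from rfl]
  have hF4 : fib (m + 4) = fib (m + 2) + fib (m + 3) := Nat.fib_add_two
  have hlt : fib (m + 2) < fib (m + 3) := Nat.fib_lt_fib_succ (by omega)
  have h1 : s (b * q + r) = s (q + 1) := hs.apply_mul_add_of_two_le q hr hrb.le
  have h2 : s (b * q + r + 1) = s (q + 1) := hs.apply_mul_add_of_two_le q (by omega) hrb
  exact ⟨⟨by omega, fun h => by omega⟩, by omega, fun h => by omega⟩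

lemma fibBoundAt (hb : 2 ≤ b) (hs : IsSb b s) (m : ℕ) {n : ℕ} (hn : b ^ m ≤ n)
    (hn' : n < b ^ (m + 1)) : FibBoundAt b s m n := by
  induction m generalizing n with
  | zero =>
    rw [pow_zero] at hn
    rw [zero_add, pow_one] at hn'
    have h0 : s n = 1 := hs.apply_of_pos_of_le hn hn'.le
    have h1 : s (n + 1) = 1 := hs.apply_of_pos_of_le (by omega) hn'
    simp only [FibBoundAt, alternatingDigits, h0, h1, show fib 2 = 1 from rfl,
      show fib 3 = 2 from rfl]
    omega
  | succ m ih =>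
    have hb0 : 0 < b := by omega
    set q := n / b with hq_def
    have hq : b ^ m ≤ q := (Nat.le_div_iff_mul_le hb0).2 (by rwa [← pow_succ])
    have hq₁ : q < b ^ (m + 1) := (Nat.div_lt_iff_lt_mul hb0).2 (by rwa [← pow_succ])
    have hq' : s (q + 1) ≤ fib (m + 2) := by
      rcases (show q + 1 ≤ b ^ (m + 1) by omega).lt_or_eq with hlt | heq
      · exact (ih (by omega) hlt).1.1
      · rw [heq, hs.apply_pow]
        exact Nat.fib_pos.2 (by omega)
    rw [← Nat.div_add_mod n b, ← hq_def]
    obtain h | h | h : n % b = 0 ∨ n % b = 1 ∨ 2 ≤ n % b := by omega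
    · rw [h, add_zero]
      exact hs.fibBoundAt_mul hb0 (ih hq hq₁)
    · rw [h]
      exact hs.fibBoundAt_mul_add_one hb (ih hq hq₁) hq'
    · exact hs.fibBoundAt_mul_add hq' h (Nat.mod_lt n hb0)

end IsSb

/-- a_k = (b^k-1)/(b^2-1) + ((1-(-1)^k)/2)·b/(b+1) is a positive integer in
[b^{k-2}, b^{k-1}), s_b(a_k) = F_k, and it is the smallest such n with s_b(n) = F_k. -/
theorem stmt7 (b k : ℕ) (hb : 2 ≤ b) (hk : 2 ≤ k) (s : ℕ → ℕ) (hs : IsSb b s) :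
    ∃ a : ℕ,
      (a : ℚ) = ((b : ℚ) ^ k - 1) / ((b : ℚ) ^ 2 - 1)
          + ((1 - (-1 : ℚ) ^ k) / 2) * ((b : ℚ) / ((b : ℚ) + 1)) ∧
      0 < a ∧ b ^ (k - 2) ≤ a ∧ a < b ^ (k - 1) ∧ s a = Nat.fib k ∧
      ∀ n : ℕ, b ^ (k - 2) ≤ n → n < b ^ (k - 1) → s n = Nat.fib k → a ≤ n := by
  obtain ⟨m, rfl⟩ : ∃ m, k = m + 2 := ⟨k - 2, by omega⟩
  rw [Nat.add_sub_cancel, show m + 2 - 1 = m + 1 by omega]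
  have hlow : b ^ m ≤ alternatingDigits b m + m % 2 :=
    (pow_le_alternatingDigits m).trans (Nat.le_add_right _ _)
  refine ⟨alternatingDigits b m + m % 2, cast_alternatingDigits_add_mod_two (by omega) m,
    (pow_pos (by omega) m).trans_le hlow, hlow, alternatingDigits_add_mod_two_lt hb m,
    (hs.apply_alternatingDigits hb m).1, fun n hn hn' hsn => ?_⟩
  exact (hs.fibBoundAt hb m hn hn').1.2 hsn
end

section
/- Let b ≥ 2, ã_k = (b^k - 1)/(b^2 - 1) for k ≥ 0, and let h : [0,∞) → [0,∞) be the piecewise linear function with h(ã_k) = F_k interpolating linearly on each interval [ã_k, ã_{k+1}]. Then for all x ≥ 0: h(x) + h(bx + 1/(b+1)) = h(b^2 x + 1). -/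
/-- ã_k = (b^k-1)/(b^2-1) as a real number. -/
noncomputable def atil (b k : ℕ) : ℝ := ((b : ℝ) ^ k - 1) / ((b : ℝ) ^ 2 - 1)

/-- `h` is the piecewise linear function through the points (a k, y k), k ≥ 0. -/
def IsPLThrough (a y : ℕ → ℝ) (h : ℝ → ℝ) : Prop :=
  ∀ k : ℕ, ∀ x ∈ Set.Icc (a k) (a (k + 1)),
    h x = y k + (x - a k) * (y (k + 1) - y k) / (a (k + 1) - a k)

/-- For all x ≥ 0: h(x) + h(bx + 1/(b+1)) = h(b²x + 1). -/
theorem stmt9 (b : ℕ) (hb : 2 ≤ b) (h : ℝ → ℝ)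
    (hh : IsPLThrough (atil b) (fun k => (Nat.fib k : ℝ)) h) :
    ∀ x : ℝ, 0 ≤ x →
      h x + h ((b : ℝ) * x + 1 / ((b : ℝ) + 1)) = h ((b : ℝ) ^ 2 * x + 1) := by
  intro x hx
  have hB2 : (2:ℝ) ≤ (b:ℝ) := by exact_mod_cast hb
  set B : ℝ := (b : ℝ) with hB
  have hB1 : (1:ℝ) < B := by linarith
  have hB0 : (0:ℝ) < B := by linarith
  have hden : (0:ℝ) < B^2 - 1 := by nlinarith
  have hden' : B^2 - 1 ≠ 0 := ne_of_gt hden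
  have hB1' : B + 1 ≠ 0 := by linarith
  have hpow : ∀ k : ℕ, (0:ℝ) < B ^ k := fun k => pow_pos hB0 k
  have key1 : ∀ k : ℕ, B * atil b k + 1/(B+1) = atil b (k+1) := by
    intro k
    unfold atil
    rw [← hB]
    field_simp
    ring
  have key2 : ∀ k : ℕ, B^2 * atil b k + 1 = atil b (k+2) := by
    intro k
    unfold atil
    rw [← hB]
    field_simp
    ring
  have hdiff : ∀ k : ℕ, atil b (k+1) - atil b k = B^k * (B - 1) / (B^2 - 1) := by
    intro k
    unfold atil
    rw [← hB, div_sub_div_same]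
    congr 1
    ring
  have hdpos : ∀ k : ℕ, 0 < atil b (k+1) - atil b k := by
    intro k
    rw [hdiff k]
    exact div_pos (mul_pos (hpow k) (by linarith)) hden
  have hex : ∃ k : ℕ, x ≤ atil b (k+1) := by
    obtain ⟨n, hn⟩ := pow_unbounded_of_one_lt (x * (B^2-1) + 1) hB1
    refine ⟨n, ?_⟩
    unfold atil
    rw [← hB, le_div_iff₀ hden]
    have hle : B ^ n ≤ B ^ (n+1) := by
      have := hpow n
      calc B^n = B^n * 1 := (mul_one _).symm
      _ ≤ B^n * B := by nlinarith
      _ = B^(n+1) := (pow_succ B n).symm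
    linarith
  obtain ⟨k, hk1, hk2⟩ : ∃ k : ℕ, atil b k ≤ x ∧ x ≤ atil b (k+1) := by
    refine ⟨Nat.find hex, ?_, Nat.find_spec hex⟩
    rcases Nat.eq_zero_or_pos (Nat.find hex) with h0 | h0
    · rw [h0]; simpa [atil] using hx
    · have hmin := Nat.find_min hex (Nat.sub_lt h0 one_pos)
      push_neg at hmin
      have : atil b (Nat.find hex - 1 + 1) < x := hmin
      rw [Nat.sub_add_cancel h0] at this
      exact this.le
  have mem1 : x ∈ Set.Icc (atil b k) (atil b (k+1)) := ⟨hk1, hk2⟩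
  have mem2 : B * x + 1/(B+1) ∈ Set.Icc (atil b (k+1)) (atil b (k+2)) := by
    constructor
    · rw [← key1 k]; nlinarith
    · rw [← key1 (k+1)]; nlinarith
  have mem3 : B^2 * x + 1 ∈ Set.Icc (atil b (k+2)) (atil b (k+3)) := by
    have hB2pos : (0:ℝ) < B^2 := by positivity
    constructor
    · rw [← key2 k]; nlinarith
    · rw [← key2 (k+1)]; nlinarith
  have e1 := hh k x mem1
  have e2 := hh (k+1) (B * x + 1/(B+1)) mem2
  have e3 := hh (k+2) (B^2 * x + 1) mem3
  simp only [show k+1+1 = k+2 from rfl, show k+2+1 = k+3 from rfl] at e1 e2 e3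
  have r1 : B * x + 1/(B+1) - atil b (k+1) = B * (x - atil b k) := by
    have := key1 k; linarith
  have r2 : B^2 * x + 1 - atil b (k+2) = B^2 * (x - atil b k) := by
    have := key2 k; linarith
  have r3 : atil b (k+2) - atil b (k+1) = B * (atil b (k+1) - atil b k) := by
    rw [hdiff, hdiff]; ring
  have r4 : atil b (k+3) - atil b (k+2) = B^2 * (atil b (k+1) - atil b k) := by
    rw [hdiff, hdiff]; ring
  have hf2 : (Nat.fib (k+2) : ℝ) = Nat.fib k + Nat.fib (k+1) := by
    push_cast [Nat.fib_add_two]; ring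
  have hf3 : (Nat.fib (k+3) : ℝ) = Nat.fib k + 2 * Nat.fib (k+1) := by
    have : Nat.fib (k+3) = Nat.fib k + 2 * Nat.fib (k+1) := by
      have h1 : Nat.fib (k+3) = Nat.fib (k+1) + Nat.fib (k+2) := Nat.fib_add_two
      have h2 : Nat.fib (k+2) = Nat.fib k + Nat.fib (k+1) := Nat.fib_add_two
      omega
    exact_mod_cast this
  have hd : atil b (k+1) - atil b k ≠ 0 := (hdpos k).ne'
  rw [e1, e2, e3, r1, r2, r3, r4]
  rw [hf3, hf2]
  field_simp
  ring
end

section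
/- With b ≥ 2 and h the piecewise linear interpolant through the points (ã_k, F_k) where ã_k = (b^k-1)/(b^2-1), the sequence of slopes γ_k = (F_{k+1} - F_k)/(ã_{k+1} - ã_k) = F_{k-1}(b+1)/b^k, for k ≥ 2, is nonincreasing; consequently h is concave on [1, ∞). -/
noncomputable def gam (b k : ℕ) : ℝ :=
  ((Nat.fib (k + 1) : ℝ) - Nat.fib k) / (atil b (k + 1) - atil b k)

noncomputable def Lline (b k : ℕ) (x : ℝ) : ℝ :=
  (Nat.fib k : ℝ) + (x - atil b k) * gam b k

lemma atil_sub {b : ℕ} (hb : 2 ≤ b) (k : ℕ) :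
    atil b (k + 1) - atil b k = (b : ℝ) ^ k / ((b : ℝ) + 1) := by
  have hB : (2 : ℝ) ≤ (b : ℝ) := by exact_mod_cast hb
  have h1 : (b : ℝ) - 1 ≠ 0 := by linarith
  unfold atil
  rw [div_sub_div_same,
    show ((b : ℝ) ^ 2 - 1) = ((b : ℝ) - 1) * ((b : ℝ) + 1) by ring,
    show (b : ℝ) ^ (k + 1) - 1 - ((b : ℝ) ^ k - 1) = ((b : ℝ) - 1) * (b : ℝ) ^ k by ring,
    mul_div_mul_left _ _ h1]

lemma atil_sub_pos {b : ℕ} (hb : 2 ≤ b) (k : ℕ) : 0 < atil b (k + 1) - atil b k := by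
  have hB : (2 : ℝ) ≤ (b : ℝ) := by exact_mod_cast hb
  rw [atil_sub hb]
  exact div_pos (pow_pos (by linarith) k) (by linarith)

lemma atil_mono {b : ℕ} (hb : 2 ≤ b) : Monotone (atil b) :=
  (strictMono_nat_of_lt_succ (fun n => by have := atil_sub_pos hb n; linarith)).monotone

lemma gam_eq {b : ℕ} (hb : 2 ≤ b) {k : ℕ} (hk : 2 ≤ k) :
    gam b k = (Nat.fib (k - 1) : ℝ) * ((b : ℝ) + 1) / (b : ℝ) ^ k := by
  obtain ⟨m, rfl⟩ : ∃ m, k = m + 2 := ⟨k - 2, by omega⟩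
  unfold gam
  rw [atil_sub hb]
  have hfib : (Nat.fib (m + 2 + 1) : ℝ) - Nat.fib (m + 2) = Nat.fib (m + 1) := by
    have := Nat.fib_add_two (n := m + 1)
    push_cast [this]; ring
  rw [hfib, div_div_eq_mul_div]
  rfl

lemma fib_le_mul {b : ℕ} (hb : 2 ≤ b) {k : ℕ} (hk : 2 ≤ k) :
    (Nat.fib k : ℝ) ≤ (b : ℝ) * Nat.fib (k - 1) := by
  obtain ⟨m, rfl⟩ : ∃ m, k = m + 2 := ⟨k - 2, by omega⟩
  have h2 : Nat.fib (m + 2) ≤ 2 * Nat.fib (m + 1) := by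
    rw [Nat.fib_add_two]
    have := Nat.fib_le_fib_succ (n := m)
    omega
  have h3 : 2 * Nat.fib (m + 1) ≤ b * Nat.fib (m + 1) := Nat.mul_le_mul_right _ hb
  have h4 : Nat.fib (m + 2) ≤ b * Nat.fib (m + 1) := le_trans h2 h3
  have h5 : m + 2 - 1 = m + 1 := rfl
  rw [h5]
  exact_mod_cast h4

lemma gam_anti {b : ℕ} (hb : 2 ≤ b) {k : ℕ} (hk : 2 ≤ k) : gam b (k + 1) ≤ gam b k := by
  have hB : (2 : ℝ) ≤ (b : ℝ) := by exact_mod_cast hb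
  rw [gam_eq hb hk, gam_eq hb (by omega : 2 ≤ k + 1)]
  have h1 : k + 1 - 1 = k := rfl
  rw [h1]
  have hpk : (0 : ℝ) < (b : ℝ) ^ k := pow_pos (by linarith) k
  have hfib := fib_le_mul hb hk
  rw [pow_succ, div_le_div_iff₀ (by positivity) hpk]
  have hmul := mul_le_mul_of_nonneg_right hfib
    (show (0 : ℝ) ≤ ((b : ℝ) + 1) * (b : ℝ) ^ k by positivity)
  nlinarith [hmul]

lemma Lline_anchor {b : ℕ} (hb : 2 ≤ b) (k : ℕ) :
    Lline b k (atil b (k + 1)) = Nat.fib (k + 1) := by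
  have hne : atil b (k + 1) - atil b k ≠ 0 := ne_of_gt (atil_sub_pos hb k)
  unfold Lline gam
  rw [mul_comm, div_mul_cancel₀ _ hne]
  ring

lemma Lline_succ {b : ℕ} (hb : 2 ≤ b) (k : ℕ) (x : ℝ) :
    Lline b (k + 1) x = Lline b k x + (x - atil b (k + 1)) * (gam b (k + 1) - gam b k) := by
  have ha := Lline_anchor hb k
  unfold Lline at *
  linear_combination -ha

lemma Lline_le_of_ge {b : ℕ} (hb : 2 ≤ b) {k j : ℕ} (hk : 2 ≤ k) (hkj : k ≤ j) :
    ∀ x : ℝ, atil b j ≤ x → Lline b j x ≤ Lline b k x := by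
  induction j, hkj using Nat.le_induction with
  | base => intro x _; exact le_refl _
  | succ j hj ih =>
    intro x hx
    have hstep : atil b j ≤ atil b (j + 1) := atil_mono hb (Nat.le_succ j)
    have h1 := gam_anti hb (le_trans hk hj)
    have h2 : 0 ≤ x - atil b (j + 1) := by linarith
    have h3 := ih x (le_trans hstep hx)
    rw [Lline_succ hb j]
    nlinarith

lemma Lline_le_of_le {b : ℕ} (hb : 2 ≤ b) {k j : ℕ} (hk : 2 ≤ k) (hkj : k ≤ j) :
    ∀ x : ℝ, x ≤ atil b (k + 1) → Lline b k x ≤ Lline b j x := by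
  induction j, hkj using Nat.le_induction with
  | base => intro x _; exact le_refl _
  | succ j hj ih =>
    intro x hx
    have hmono : atil b (k + 1) ≤ atil b (j + 1) := atil_mono hb (by omega)
    have h1 := gam_anti hb (le_trans hk hj)
    have h2 : x - atil b (j + 1) ≤ 0 := by linarith
    have h3 := ih x hx
    rw [Lline_succ hb j]
    nlinarith

lemma atil_two {b : ℕ} (hb : 2 ≤ b) : atil b 2 = 1 := by
  have hB : (2 : ℝ) ≤ (b : ℝ) := by exact_mod_cast hb
  unfold atil
  exact div_self (by nlinarith)

lemma exists_piece {b : ℕ} (hb : 2 ≤ b) {z : ℝ} (hz : 1 ≤ z) :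
    ∃ k, 2 ≤ k ∧ atil b k ≤ z ∧ z ≤ atil b (k + 1) := by
  have hB : (2 : ℝ) ≤ (b : ℝ) := by exact_mod_cast hb
  have hP : ∃ n : ℕ, z < atil b n := by
    obtain ⟨n, hn⟩ := pow_unbounded_of_one_lt (z * ((b : ℝ) ^ 2 - 1) + 1)
      (show (1 : ℝ) < (b : ℝ) by linarith)
    refine ⟨n, ?_⟩
    unfold atil
    rw [lt_div_iff₀ (by nlinarith)]
    linarith
  classical
  have h3 : 2 < Nat.find hP := by
    rw [Nat.lt_find_iff]
    intro m hm
    have hle : atil b m ≤ atil b 2 := atil_mono hb hm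
    rw [atil_two hb] at hle
    exact not_lt.mpr (le_trans hle hz)
  refine ⟨Nat.find hP - 1, by omega, ?_, ?_⟩
  · have := Nat.find_min hP (show Nat.find hP - 1 < Nat.find hP by omega)
    exact not_lt.mp this
  · have hn : Nat.find hP - 1 + 1 = Nat.find hP := by omega
    rw [hn]
    exact le_of_lt (Nat.find_spec hP)

/-- The slopes γ_k = (F_{k+1}-F_k)/(ã_{k+1}-ã_k) = F_{k-1}(b+1)/b^k are nonincreasing
for k ≥ 2, and h is concave on [1, ∞). -/
theorem stmt11 (b : ℕ) (hb : 2 ≤ b) (h : ℝ → ℝ)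
    (hh : IsPLThrough (atil b) (fun k => (Nat.fib k : ℝ)) h) :
    (∀ k : ℕ, 2 ≤ k →
      ((Nat.fib (k + 1) : ℝ) - Nat.fib k) / (atil b (k + 1) - atil b k)
        = (Nat.fib (k - 1) : ℝ) * ((b : ℝ) + 1) / (b : ℝ) ^ k) ∧
    (∀ k : ℕ, 2 ≤ k →
      (Nat.fib k : ℝ) * ((b : ℝ) + 1) / (b : ℝ) ^ (k + 1)
        ≤ (Nat.fib (k - 1) : ℝ) * ((b : ℝ) + 1) / (b : ℝ) ^ k) ∧
    ConcaveOn ℝ (Set.Ici (1 : ℝ)) h := by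
  refine ⟨fun k hk => ?_, fun k hk => ?_, ?_⟩
  · have := gam_eq hb hk
    unfold gam at this
    exact this
  · have hg := gam_anti hb hk
    rw [gam_eq hb hk, gam_eq hb (by omega : 2 ≤ k + 1)] at hg
    have h1 : k + 1 - 1 = k := rfl
    rw [h1] at hg
    exact hg
  · refine ⟨convex_Ici 1, ?_⟩
    intro x hx y hy t s ht hs hts
    simp only [smul_eq_mul]
    have hx' : (1 : ℝ) ≤ x := hx
    have hy' : (1 : ℝ) ≤ y := hy
    have hz : (1 : ℝ) ≤ t * x + s * y := by
      nlinarith [mul_le_mul_of_nonneg_left hx' ht, mul_le_mul_of_nonneg_left hy' hs]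
    obtain ⟨k, hk2, hka, hkb⟩ := exists_piece hb hz
    obtain ⟨j, hj2, hja, hjb⟩ := exists_piece hb hx'
    obtain ⟨i, hi2, hia, hib⟩ := exists_piece hb hy'
    have hhz : h (t * x + s * y) = Lline b k (t * x + s * y) := by
      rw [hh k _ ⟨hka, hkb⟩]; unfold Lline gam; ring
    have hhx : h x = Lline b j x := by
      rw [hh j x ⟨hja, hjb⟩]; unfold Lline gam; ring
    have hhy : h y = Lline b i y := by
      rw [hh i y ⟨hia, hib⟩]; unfold Lline gam; ring
    have hcx : Lline b j x ≤ Lline b k x := by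
      rcases le_total k j with hkj | hjk
      · exact Lline_le_of_ge hb hk2 hkj x hja
      · exact Lline_le_of_le hb hj2 hjk x hjb
    have hcy : Lline b i y ≤ Lline b k y := by
      rcases le_total k i with hki | hik
      · exact Lline_le_of_ge hb hk2 hki y hia
      · exact Lline_le_of_le hb hi2 hik y hib
    have hlin : Lline b k (t * x + s * y) = t * Lline b k x + s * Lline b k y := by
      unfold Lline
      linear_combination (atil b k * gam b k - (Nat.fib k : ℝ)) * hts
    rw [hhz, hhx, hhy, hlin]
    have := mul_le_mul_of_nonneg_left hcx ht
    have := mul_le_mul_of_nonneg_left hcy hs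
    linarith
end

section
/- Let b ≥ 2, φ = (1+√5)/2, ã_k = (b^k-1)/(b^2-1), and let h̃ be the piecewise linear function with h̃(ã_k) = φ^k/√5. Define H̃(x) = ((b^2-1)x + 1)^{log_b φ}/√5. Then H̃ is concave on [0,∞), H̃(ã_k) = φ^k/√5 for all k ≥ 0, and h̃(x) ≤ H̃(x) for all x ≥ 0, with equality at each x = ã_k. -/
/-!
H̃ is y ↦ y ^ (log_b φ) / √5 composed with the affine map x ↦ (b² - 1) x + 1, and
0 < log_b φ ≤ 1 because φ < 2 ≤ b, so H̃ is concave. The affine map sends ã_k to b^k, and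
(b^k)^(log_b φ) = φ^k, so H̃ passes through the nodes of h̃. A concave function lies above each of
its chords, hence above h̃ on every [ã_k, ã_{k+1}], and these intervals cover [0, ∞).
-/

open Real

open Set

lemma ConcaveOn.chord_le {s : Set ℝ} {f : ℝ → ℝ} (hf : ConcaveOn ℝ s f) {a c x : ℝ}
    (ha : a ∈ s) (hc : c ∈ s) (hac : a < c) (hx : x ∈ Icc a c) :
    f a + (x - a) * (f c - f a) / (c - a) ≤ f x := by
  have hca : c - a ≠ 0 := (sub_pos.mpr hac).ne'
  set t := (x - a) / (c - a) with ht
  have ht0 : 0 ≤ t := div_nonneg (by linarith [hx.1]) (by linarith)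
  have ht1 : t ≤ 1 := (div_le_one (by linarith)).mpr (by linarith [hx.2])
  have hxt : (1 - t) * a + t * c = x := by rw [ht]; field_simp; ring
  calc f a + (x - a) * (f c - f a) / (c - a) = (1 - t) * f a + t * f c := by rw [ht]; ring
    _ ≤ f ((1 - t) * a + t * c) := hf.2 ha hc (by linarith) ht0 (by ring)
    _ = f x := by rw [hxt]

namespace IsPLThrough

variable {a y : ℕ → ℝ} {h : ℝ → ℝ}

lemma apply_node (hh : IsPLThrough a y h) {k : ℕ} (hk : a k ≤ a (k + 1)) : h (a k) = y k := by
  simp [hh k (a k) ⟨le_rfl, hk⟩]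

lemma le_of_concaveOn {s : Set ℝ} {f : ℝ → ℝ} (hh : IsPLThrough a (fun k => f (a k)) h)
    (hf : ConcaveOn ℝ s f) (has : ∀ k, a k ∈ s) {k : ℕ} (hk : a k < a (k + 1)) {x : ℝ}
    (hx : x ∈ Icc (a k) (a (k + 1))) : h x ≤ f x := by
  rw [hh k x hx]
  exact hf.chord_le (has k) (has (k + 1)) hk hx

end IsPLThrough

lemma concaveOn_rpow_affine {B p : ℝ} (hB : 0 ≤ B) (hp0 : 0 ≤ p) (hp1 : p ≤ 1) :
    ConcaveOn ℝ (Ici 0) (fun x => (B * x + 1) ^ p) := by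
  have h := (concaveOn_rpow hp0 hp1).comp_affineMap (AffineMap.lineMap (1 : ℝ) (B + 1))
  refine (h.subset (fun x (hx : 0 ≤ x) => ?_) (convex_Ici 0)).congr fun x _ => ?_
  · simp only [mem_preimage, AffineMap.lineMap_apply_ring', mem_Ici]
    nlinarith
  · simp only [Function.comp_apply, AffineMap.lineMap_apply_ring']
    ring_nf

lemma pow_rpow_logb {b y : ℝ} (hb : 0 < b) (hb1 : b ≠ 1) (hy : 0 < y) (k : ℕ) :
    (b ^ k) ^ logb b y = y ^ k := by
  rw [← rpow_pow_comm hb.le, rpow_logb hb hb1 hy]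

section atil

variable {b : ℕ}

lemma atil_zero (b : ℕ) : atil b 0 = 0 := by simp [atil]

lemma sq_sub_one_mul_atil_add_one (hb : 1 < b) (k : ℕ) :
    ((b : ℝ) ^ 2 - 1) * atil b k + 1 = (b : ℝ) ^ k := by
  have : (b : ℝ) ^ 2 - 1 ≠ 0 := by
    have : (1 : ℝ) < b := by exact_mod_cast hb
    nlinarith
  rw [atil]; field_simp; ring

lemma strictMono_atil (hb : 1 < b) : StrictMono (atil b) := by
  have hb' : (1 : ℝ) < b := by exact_mod_cast hb
  intro m n hmn
  exact div_lt_div_of_pos_right (by linarith [pow_lt_pow_right₀ hb' hmn]) (by nlinarith)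

lemma atil_nonneg (hb : 1 < b) (k : ℕ) : 0 ≤ atil b k :=
  atil_zero b ▸ (strictMono_atil hb).monotone k.zero_le

lemma exists_mem_Icc_atil (hb : 1 < b) {x : ℝ} (hx : 0 ≤ x) :
    ∃ k, x ∈ Icc (atil b k) (atil b (k + 1)) := by
  have hb' : (1 : ℝ) < b := by exact_mod_cast hb
  have hB : 0 < (b : ℝ) ^ 2 - 1 := by nlinarith
  obtain ⟨k, hk, hk1⟩ := exists_nat_pow_near (x := ((b : ℝ) ^ 2 - 1) * x + 1)
    (by nlinarith) hb'
  refine ⟨k, ?_, ?_⟩ <;>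
  · refine (mul_le_mul_iff_of_pos_left hB).mp ?_
    linarith [sq_sub_one_mul_atil_add_one hb k, sq_sub_one_mul_atil_add_one hb (k + 1)]

end atil

/-- With φ the golden ratio and H̃(x) = ((b²-1)x+1)^{log_b φ}/√5: H̃ is concave on
[0,∞), passes through the points (ã_k, φ^k/√5), and dominates the piecewise linear
interpolant h̃ of these points, with equality at each ã_k. -/
theorem stmt15 (b : ℕ) (hb : 2 ≤ b) (ht : ℝ → ℝ)
    (hht : IsPLThrough (atil b) (fun k => goldenRatio ^ k / Real.sqrt 5) ht)
    (Ht : ℝ → ℝ)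
    (hHt : ∀ x : ℝ, Ht x
      = (((b : ℝ) ^ 2 - 1) * x + 1) ^ (Real.log goldenRatio / Real.log b) / Real.sqrt 5) :
    ConcaveOn ℝ (Set.Ici (0 : ℝ)) Ht ∧
    (∀ k : ℕ, Ht (atil b k) = goldenRatio ^ k / Real.sqrt 5) ∧
    (∀ x : ℝ, 0 ≤ x → ht x ≤ Ht x) ∧
    (∀ k : ℕ, ht (atil b k) = Ht (atil b k)) := by
  have hb1 : 1 < b := by omega
  have hb' : (1 : ℝ) < b := by exact_mod_cast hb1
  have hlogb_nonneg : 0 ≤ logb b goldenRatio := logb_nonneg hb' one_lt_goldenRatio.le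
  have hlogb_le_one : logb b goldenRatio ≤ 1 := by
    rw [← logb_self_eq_one hb', logb_le_logb hb' goldenRatio_pos (by linarith)]
    exact goldenRatio_lt_two.le.trans (by exact_mod_cast hb)
  have hconc : ConcaveOn ℝ (Ici 0) Ht :=
    ((concaveOn_rpow_affine (B := (b : ℝ) ^ 2 - 1) (by nlinarith) hlogb_nonneg
      hlogb_le_one).smul (inv_nonneg.mpr (sqrt_nonneg 5))).congr fun x _ => by
        simp only [hHt, smul_eq_mul, inv_mul_eq_div]; rfl
  have hnode (k : ℕ) : Ht (atil b k) = goldenRatio ^ k / √5 := by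
    rw [hHt, sq_sub_one_mul_atil_add_one hb1]
    exact congrArg (· / √5) (pow_rpow_logb (by linarith) hb'.ne' goldenRatio_pos k)
  have hht_nodes : IsPLThrough (atil b) (fun k => Ht (atil b k)) ht := by simpa only [hnode]
  refine ⟨hconc, hnode, fun x hx => ?_, fun k => ?_⟩
  · obtain ⟨k, hk⟩ := exists_mem_Icc_atil hb1 hx
    exact hht_nodes.le_of_concaveOn hconc (atil_nonneg hb1)
      (strictMono_atil hb1 k.lt_succ_self) hk
  · exact hht_nodes.apply_node (strictMono_atil hb1 k.lt_succ_self).le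
end

section
/- Let b ≥ 2, and let h be the piecewise linear function through ((b^k-1)/(b^2-1), F_k), h̃ the piecewise linear function through ((b^k-1)/(b^2-1), φ^k/√5). Then for ã_k ≤ x ≤ ã_{k+1}, |h̃(x) - h(x)| ≤ φ^{-k}/√5. -/
open Real

/-! The difference of the two interpolants interpolates the Binet error φ^k/√5 - F_k = ψ^k/√5,
and a linear interpolant on [ã_k, ã_{k+1}] lies between its values at the two nodes, which are
at most φ^{-k}/√5 in absolute value. -/

namespace IsPLThrough

variable {a y z : ℕ → ℝ} {h g : ℝ → ℝ}

theorem sub (hh : IsPLThrough a y h) (hg : IsPLThrough a z g) :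
    IsPLThrough a (fun k => y k - z k) (fun x => h x - g x) := by
  intro k x hx
  simp only [hh k x hx, hg k x hx]
  ring

theorem mem_uIcc (hh : IsPLThrough a y h) {k : ℕ} {x : ℝ} (hx : x ∈ Set.Icc (a k) (a (k + 1))) :
    h x ∈ Set.uIcc (y k) (y (k + 1)) := by
  have hd : 0 ≤ a (k + 1) - a k := by linarith [hx.1.trans hx.2]
  -- a zero denominator forces `x = a k`, and then `t = 0` as well
  set t := (x - a k) / (a (k + 1) - a k)
  have ht : t ∈ Set.Icc 0 1 :=
    ⟨div_nonneg (by linarith [hx.1]) hd, div_le_one_of_le₀ (by linarith [hx.2]) hd⟩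
  have hline : h x = AffineMap.lineMap (y k) (y (k + 1)) t := by
    rw [hh k x hx, AffineMap.lineMap_apply_ring', mul_div_right_comm]
    ring
  rw [hline, ← segment_eq_uIcc]
  exact lineMap_mem_segment ℝ _ _ ht

theorem abs_le (hh : IsPLThrough a y h) {k : ℕ} {x : ℝ} (hx : x ∈ Set.Icc (a k) (a (k + 1)))
    {M : ℝ} (hk : |y k| ≤ M) (hk1 : |y (k + 1)| ≤ M) : |h x| ≤ M := by
  rw [_root_.abs_le] at hk hk1 ⊢
  exact Set.ordConnected_Icc.uIcc_subset hk hk1 (hh.mem_uIcc hx)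

end IsPLThrough

theorem abs_goldenRatio_pow_div_sqrt_five_sub_fib (n : ℕ) :
    |goldenRatio ^ n / √5 - Nat.fib n| = goldenRatio⁻¹ ^ n / √5 := by
  have hψ : |goldenConj| = goldenRatio⁻¹ := by rw [abs_of_neg goldenConj_neg, inv_goldenRatio]
  rw [Real.coe_fib_eq, ← sub_div, sub_sub_cancel, abs_div, abs_pow, hψ,
    abs_of_pos (Real.sqrt_pos.mpr (by norm_num))]

theorem stmt16_general (b : ℕ) (h ht : ℝ → ℝ)
    (hh : IsPLThrough (atil b) (fun k => (Nat.fib k : ℝ)) h)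
    (hht : IsPLThrough (atil b) (fun k => goldenRatio ^ k / Real.sqrt 5) ht)
    (k : ℕ) (x : ℝ) (hx : x ∈ Set.Icc (atil b k) (atil b (k + 1))) :
    |ht x - h x| ≤ goldenRatio ^ (-(k : ℝ)) / Real.sqrt 5 := by
  have hφ : goldenRatio ^ (-(k : ℝ)) = goldenRatio⁻¹ ^ k := by
    rw [Real.rpow_neg goldenRatio_pos.le, Real.rpow_natCast, inv_pow]
  have hφ_succ : goldenRatio⁻¹ ^ (k + 1) ≤ goldenRatio⁻¹ ^ k :=
    pow_le_pow_of_le_one (by positivity) (inv_le_one_of_one_le₀ one_lt_goldenRatio.le) k.le_succ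
  rw [hφ]
  refine (hht.sub hh).abs_le hx (abs_goldenRatio_pow_div_sqrt_five_sub_fib k).le ?_
  rw [abs_goldenRatio_pow_div_sqrt_five_sub_fib]
  gcongr

/-- For ã_k ≤ x ≤ ã_{k+1}, |h̃(x) - h(x)| ≤ φ^{-k}/√5. -/
theorem stmt16 (b : ℕ) (hb : 2 ≤ b) (h ht : ℝ → ℝ)
    (hh : IsPLThrough (atil b) (fun k => (Nat.fib k : ℝ)) h)
    (hht : IsPLThrough (atil b) (fun k => goldenRatio ^ k / Real.sqrt 5) ht)
    (k : ℕ) (x : ℝ) (hx : x ∈ Set.Icc (atil b k) (atil b (k + 1))) :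
    |ht x - h x| ≤ goldenRatio ^ (-(k : ℝ)) / Real.sqrt 5 :=
  stmt16_general b h ht hh hht k x hx
end

section
/- Let b ≥ 2, φ = (1+√5)/2, H(x) = ((b^2-1)^{log_b φ}/√5)·x^{log_b φ}, a_k = (b^k-1)/(b^2-1) + ((1-(-1)^k)/2)·b/(b+1), and h the piecewise linear function through ((b^k-1)/(b^2-1), F_k). Then lim_{k→∞} |h(a_k) - H(a_k)| = 0. -/
open Real

/-! Write `σ_k = (1 - (-1)^k)/2` and `α = log_b φ`, so that `b^α = φ` and `0 ≤ α < 1`.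
The point `a_k` lies in `[ã_k, ã_{k+1}]`, an interval of length `b^k/(b+1)`, at relative position
`σ_k b / b^k`; hence `h(a_k) = F_k + O(F_{k+1} / b^k) = F_k + o(1)` because `φ < b`.
On the other side `H(a_k) = x_k^α / √5` with `x_k = (b²-1) a_k = b^k + O(1)`, and concavity of
`x ↦ x^α` gives `|x^α - y^α| ≤ y^(α-1) |x - y|`, so `H(a_k) = (b^k)^α / √5 + o(1) = φ^k / √5 + o(1)`.
Binet's formula `F_k = φ^k / √5 + O(|ψ|^k)` closes the gap. -/

open Filter Topology
open scoped goldenRatio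

lemma abs_rpow_sub_one_le {t α : ℝ} (ht : 0 ≤ t) (hα0 : 0 ≤ α) (hα1 : α ≤ 1) :
    |t ^ α - 1| ≤ |t - 1| := by
  rcases le_total 1 t with h1 | h1
  · rw [abs_of_nonneg (sub_nonneg.2 (one_le_rpow h1 hα0)), abs_of_nonneg (sub_nonneg.2 h1)]
    linarith [rpow_le_self_of_one_le h1 hα1]
  · rw [abs_of_nonpos (sub_nonpos.2 (rpow_le_one ht h1 hα0)), abs_of_nonpos (sub_nonpos.2 h1)]
    linarith [self_le_rpow_of_le_one ht h1 hα1]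

lemma abs_rpow_sub_rpow_le {x y α : ℝ} (hx : 0 ≤ x) (hy : 0 < y) (hα0 : 0 ≤ α) (hα1 : α ≤ 1) :
    |x ^ α - y ^ α| ≤ y ^ (α - 1) * |x - y| := by
  have hxy : x ^ α = y ^ α * (x / y) ^ α := by
    rw [← mul_rpow hy.le (div_nonneg hx hy.le), mul_div_cancel₀ _ hy.ne']
  calc |x ^ α - y ^ α| = y ^ α * |(x / y) ^ α - 1| := by
        rw [hxy, ← mul_sub_one, abs_mul, abs_of_pos (rpow_pos_of_pos hy α)]
    _ ≤ y ^ α * |x / y - 1| := by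
        have := abs_rpow_sub_one_le (div_nonneg hx hy.le) hα0 hα1
        gcongr
    _ = y ^ (α - 1) * |x - y| := by
        rw [rpow_sub_one hy.ne', div_sub_one hy.ne', abs_div, abs_of_pos hy]; ring

lemma tendsto_rpow_sub_rpow_of_abs_sub_le {ι : Type*} {l : Filter ι} {x y : ι → ℝ} {α C : ℝ}
    (hα0 : 0 ≤ α) (hα1 : α < 1) (hx : ∀ i, 0 ≤ x i) (hy : Tendsto y l atTop)
    (hxy : ∀ i, |x i - y i| ≤ C) :
    Tendsto (fun i => x i ^ α - y i ^ α) l (𝓝 0) := by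
  have hdecay : Tendsto (fun i => C * y i ^ (α - 1)) l (𝓝 0) := by
    simpa using ((tendsto_rpow_neg_atTop (sub_pos.2 hα1)).comp hy).const_mul C
  refine squeeze_zero_norm' ?_ hdecay
  filter_upwards [hy.eventually_gt_atTop 0] with i hi
  calc ‖x i ^ α - y i ^ α‖ ≤ y i ^ (α - 1) * |x i - y i| :=
        abs_rpow_sub_rpow_le (hx i) hi hα0 hα1.le
    _ ≤ C * y i ^ (α - 1) := by rw [mul_comm]; gcongr; exact hxy i

lemma tendsto_fib_sub_goldenRatio_pow_div_sqrt_five :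
    Tendsto (fun n => (Nat.fib n : ℝ) - φ ^ n / √5) atTop (𝓝 0) := by
  have hψ : |ψ| < 1 := abs_lt.2 ⟨neg_one_lt_goldenConj, goldenConj_neg.trans one_pos⟩
  simpa [coe_fib_eq, sub_div] using ((tendsto_pow_atTop_nhds_zero_of_abs_lt_one hψ).div_const √5).neg

lemma tendsto_fib_div_pow {c : ℝ} (hc : φ < c) :
    Tendsto (fun n => (Nat.fib n : ℝ) / c ^ n) atTop (𝓝 0) := by
  have hc0 : 0 < c := goldenRatio_pos.trans hc
  have hmain : Tendsto (fun n => (φ / c) ^ n / √5) atTop (𝓝 0) := by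
    simpa using (tendsto_pow_atTop_nhds_zero_of_lt_one (by positivity)
      ((div_lt_one hc0).2 hc)).div_const √5
  have herr : Tendsto (fun n => ((Nat.fib n : ℝ) - φ ^ n / √5) * (c ^ n)⁻¹) atTop (𝓝 0) := by
    simpa using tendsto_fib_sub_goldenRatio_pow_div_sqrt_five.mul
      (tendsto_inv_atTop_zero.comp (tendsto_pow_atTop_atTop_of_one_lt (one_lt_goldenRatio.trans hc)))
  rw [← add_zero 0]
  refine (herr.add hmain).congr fun n => ?_
  simp only [div_pow]
  field_simp
  ring

lemma tendsto_mul_div_pow_mul_fib_succ_sub_fib {b : ℝ} (hb : φ < b) {s : ℕ → ℝ}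
    (hs0 : ∀ k, 0 ≤ s k) (hs1 : ∀ k, s k ≤ 1) :
    Tendsto (fun k => s k * b / b ^ k * ((Nat.fib (k + 1) : ℝ) - Nat.fib k)) atTop (𝓝 0) := by
  have hb0 : 0 < b := goldenRatio_pos.trans hb
  have hbound : Tendsto (fun k => b ^ 2 * ((Nat.fib (k + 1) : ℝ) / b ^ (k + 1))) atTop (𝓝 0) := by
    simpa using ((tendsto_add_atTop_iff_nat 1).2 (tendsto_fib_div_pow hb)).const_mul (b ^ 2)
  have hfib (k : ℕ) : (Nat.fib k : ℝ) ≤ Nat.fib (k + 1) := by exact_mod_cast Nat.fib_le_fib_succ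
  refine squeeze_zero (fun k => ?_) (fun k => ?_) hbound
  · have := hs0 k
    exact mul_nonneg (by positivity) (sub_nonneg.2 (hfib k))
  · calc s k * b / b ^ k * ((Nat.fib (k + 1) : ℝ) - Nat.fib k)
        ≤ 1 * b / b ^ k * Nat.fib (k + 1) := by
          have := hfib k
          gcongr
          · exact hs1 k
          · linarith [(Nat.fib k).cast_nonneg (α := ℝ)]
      _ = b ^ 2 * ((Nat.fib (k + 1) : ℝ) / b ^ (k + 1)) := by
          field_simp
          ring

lemma one_sub_neg_one_pow_div_two_nonneg (k : ℕ) : 0 ≤ (1 - (-1 : ℝ) ^ k) / 2 := by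
  rcases Nat.even_or_odd k with hk | hk <;> simp [hk.neg_one_pow]

lemma one_sub_neg_one_pow_div_two_le_one (k : ℕ) : (1 - (-1 : ℝ) ^ k) / 2 ≤ 1 := by
  rcases Nat.even_or_odd k with hk | hk <;> norm_num [hk.neg_one_pow]

lemma one_sub_neg_one_pow_div_two_mul_le_pow {x : ℝ} (hx : 1 ≤ x) (k : ℕ) :
    (1 - (-1 : ℝ) ^ k) / 2 * x ≤ x ^ k := by
  rcases Nat.even_or_odd k with hk | hk
  · simp [hk.neg_one_pow]; positivity
  · norm_num [hk.neg_one_pow]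
    exact le_self_pow₀ hx (Nat.pos_iff_ne_zero.1 hk.pos)

lemma IsPLThrough.apply_add_mul {a y : ℕ → ℝ} {h : ℝ → ℝ} (hh : IsPLThrough a y h) {k : ℕ}
    (hk : a k < a (k + 1)) {t : ℝ} (ht0 : 0 ≤ t) (ht1 : t ≤ 1) :
    h (a k + t * (a (k + 1) - a k)) = y k + t * (y (k + 1) - y k) := by
  have hd : 0 < a (k + 1) - a k := sub_pos.2 hk
  rw [hh k _ ⟨by nlinarith, by nlinarith⟩]
  field_simp
  ring

section Interpolation

variable {b : ℕ} {k : ℕ} {s : ℝ}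

lemma atil_succ_sub_atil (hb : 2 ≤ b) :
    atil b (k + 1) - atil b k = (b : ℝ) ^ k / (b + 1) := by
  have hb' : (2 : ℝ) ≤ b := by exact_mod_cast hb
  have : (b : ℝ) ^ 2 - 1 ≠ 0 := by nlinarith
  unfold atil
  field_simp
  ring

lemma IsPLThrough.apply_atil_add {y : ℕ → ℝ} {h : ℝ → ℝ} (hh : IsPLThrough (atil b) y h)
    (hb : 2 ≤ b) (hs0 : 0 ≤ s) (hsk : s * b ≤ (b : ℝ) ^ k) :
    h (atil b k + s * (b / (b + 1))) = y k + s * b / b ^ k * (y (k + 1) - y k) := by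
  have hb' : (2 : ℝ) ≤ b := by exact_mod_cast hb
  have hbk : (0 : ℝ) < b ^ k := by positivity
  have hpos : atil b k < atil b (k + 1) := by
    rw [← sub_pos, atil_succ_sub_atil hb]; positivity
  have hs : atil b k + s * (b / (b + 1))
      = atil b k + s * b / b ^ k * (atil b (k + 1) - atil b k) := by
    rw [atil_succ_sub_atil hb]
    field_simp
  rw [hs, hh.apply_add_mul hpos (by positivity) ((div_le_one hbk).2 hsk)]

lemma atil_add_nonneg (hb : 2 ≤ b) (hs0 : 0 ≤ s) : 0 ≤ atil b k + s * (b / (b + 1)) := by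
  have hb' : (2 : ℝ) ≤ b := by exact_mod_cast hb
  have : (1 : ℝ) ≤ b ^ k := one_le_pow₀ (by linarith)
  have : (0 : ℝ) < b ^ 2 - 1 := by nlinarith
  unfold atil
  positivity

lemma abs_mul_atil_add_sub_pow_le (hb : 2 ≤ b) (hs0 : 0 ≤ s) (hs1 : s ≤ 1) :
    |((b : ℝ) ^ 2 - 1) * (atil b k + s * (b / (b + 1))) - b ^ k| ≤ (b : ℝ) ^ 2 := by
  have hb' : (2 : ℝ) ≤ b := by exact_mod_cast hb
  have : ((b : ℝ) ^ 2 - 1) * (atil b k + s * (b / (b + 1))) - b ^ k = s * b * (b - 1) - 1 := by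
    have : (b : ℝ) ^ 2 - 1 ≠ 0 := by nlinarith
    unfold atil
    field_simp
    ring
  rw [this, abs_le]
  constructor <;> nlinarith

end Interpolation

/-- lim_{k→∞} |h(a_k) - H(a_k)| = 0, where a_k = (b^k-1)/(b²-1) + ((1-(-1)^k)/2)·b/(b+1). -/
theorem stmt18 (b : ℕ) (hb : 2 ≤ b) (h H : ℝ → ℝ)
    (hh : IsPLThrough (atil b) (fun k => (Nat.fib k : ℝ)) h)
    (hH : ∀ x : ℝ, H x = ((b : ℝ) ^ 2 - 1) ^ (Real.log goldenRatio / Real.log b)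
      / Real.sqrt 5 * x ^ (Real.log goldenRatio / Real.log b))
    (a : ℕ → ℝ)
    (ha : ∀ k : ℕ, a k = atil b k
      + ((1 - (-1 : ℝ) ^ k) / 2) * ((b : ℝ) / ((b : ℝ) + 1))) :
    Filter.Tendsto (fun k : ℕ => |h (a k) - H (a k)|) Filter.atTop (nhds 0) := by
  set α := Real.log φ / Real.log b
  set s : ℕ → ℝ := fun k => (1 - (-1 : ℝ) ^ k) / 2
  have hb1 : (1 : ℝ) < b := by exact_mod_cast hb
  have hφb : φ < b := goldenRatio_lt_two.trans_le (by exact_mod_cast hb)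
  have hbα : (b : ℝ) ^ α = φ := rpow_logb (by positivity) hb1.ne' goldenRatio_pos
  have hα0 : 0 ≤ α := logb_nonneg hb1 one_lt_goldenRatio.le
  have hα1 : α < 1 := by
    rw [← logb_self_eq_one hb1]
    exact (logb_lt_logb_iff hb1 goldenRatio_pos (by positivity)).2 hφb
  have hs0 := one_sub_neg_one_pow_div_two_nonneg
  have hdiff : ∀ k, h (a k) - H (a k) = ((Nat.fib k : ℝ) - φ ^ k / √5)
      + s k * b / b ^ k * ((Nat.fib (k + 1) : ℝ) - Nat.fib k)
      - ((((b : ℝ) ^ 2 - 1) * a k) ^ α - ((b : ℝ) ^ k) ^ α) / √5 := fun k => by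
    rw [ha, hh.apply_atil_add hb (hs0 k) (one_sub_neg_one_pow_div_two_mul_le_pow hb1.le k), hH,
      mul_rpow (by nlinarith) (atil_add_nonneg hb (hs0 k)), ← rpow_pow_comm (by positivity), hbα]
    ring
  have hH_err : Tendsto (fun k => (((b : ℝ) ^ 2 - 1) * a k) ^ α - ((b : ℝ) ^ k) ^ α) atTop (𝓝 0) :=
    tendsto_rpow_sub_rpow_of_abs_sub_le hα0 hα1
    (fun k => by rw [ha]; exact mul_nonneg (by nlinarith) (atil_add_nonneg hb (hs0 k)))
    (tendsto_pow_atTop_atTop_of_one_lt hb1)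
    (fun k => by
      rw [ha]; exact abs_mul_atil_add_sub_pow_le hb (hs0 k) (one_sub_neg_one_pow_div_two_le_one k))
  rw [show (0 : ℝ) = |0 + 0 - 0 / √5| by simp]
  refine ((tendsto_fib_sub_goldenRatio_pow_div_sqrt_five.add
    (tendsto_mul_div_pow_mul_fib_succ_sub_fib hφb hs0 one_sub_neg_one_pow_div_two_le_one)).sub
    (hH_err.div_const √5)).abs.congr fun k => by rw [hdiff]
end
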